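/- arXiv:1710.00374 — 4 statements merged into one kernel-verified Lean document; each statement's English description precedes it below -/
import Mathlib

section
/- Let ℓ ≥ 2 and let 𝓕 be a finite set of (0,1)-matrices. Then there exist constants c and d (depending only on ℓ and 𝓕) such that for all m ≥ 1 and all k with 0 ≤ k ≤ m, forb_k(m, 3, (𝒯_ℓ(3) \ 𝒯_ℓ(2)) ∪ {T_ℓ(0,2,1)} ∪ 𝓕) ≤ c · Σ_{j = max(0, k−d)}^{k} forbmax_j(m, 𝓕). -/
/-- A matrix with natural number entries, of size `k × p`. -/
abbrev MatN (k p : ℕ) := Matrix (Fin k) (Fin p) ℕ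

/-- A matrix bundled with its dimensions. -/
structure CMat where
  rows : ℕ
  cols : ℕ
  mat : MatN rows cols

/-- A matrix is simple if no two of its columns are equal. -/
def SimpleM {m n : ℕ} (A : MatN m n) : Prop :=
  ∀ j₁ j₂ : Fin n, (∀ i, A i j₁ = A i j₂) → j₁ = j₂

/-- An `r`-matrix: all entries lie in `{0, 1, …, r-1}`. -/
def RMat (r : ℕ) {m n : ℕ} (A : MatN m n) : Prop := ∀ i j, A i j < r

/-- `F` is a configuration of `A` (written `F ≺ A`): some submatrix of `A` is a row
and column permutation of `F`; equivalently there are injections of the rows and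
columns of `F` into those of `A` realizing the entries of `F`. -/
def IsConfig {k p m n : ℕ} (F : MatN k p) (A : MatN m n) : Prop :=
  ∃ f : Fin k → Fin m, ∃ g : Fin p → Fin n,
    Function.Injective f ∧ Function.Injective g ∧ ∀ i j, A (f i) (g j) = F i j

/-- `A` avoids every matrix of the family `𝓕` as a configuration. -/
def AvoidsFam {m n : ℕ} (A : MatN m n) (𝓕 : Set CMat) : Prop :=
  ∀ F ∈ 𝓕, ¬ IsConfig F.mat A

/-- `forb m r 𝓕`: the maximum number of columns of an `m`-rowed simple `r`-matrix
having no member of `𝓕` as a configuration. -/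
noncomputable def forb (m r : ℕ) (𝓕 : Set CMat) : ℕ :=
  sSup { n : ℕ | ∃ A : MatN m n, RMat r A ∧ SimpleM A ∧ AvoidsFam A 𝓕 }

/-- `forbmax m r 𝓕`: the maximum of `forb m' r 𝓕` over `m' ≤ m`. -/
noncomputable def forbmax (m r : ℕ) (𝓕 : Set CMat) : ℕ :=
  sSup { x : ℕ | ∃ m' ≤ m, x = forb m' r 𝓕 }

/-- The number of 1's in column `j` of `A` (the column sum). -/
def colSum {m n : ℕ} (A : MatN m n) (j : Fin n) : ℕ :=
  (Finset.univ.filter (fun i => A i j = 1)).card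

/-- `forbK k m r 𝓕`: as `forb`, but restricted to matrices all of whose columns
have exactly `k` entries equal to 1. -/
noncomputable def forbK (k m r : ℕ) (𝓕 : Set CMat) : ℕ :=
  sSup { n : ℕ | ∃ A : MatN m n, RMat r A ∧ SimpleM A ∧ (∀ j, colSum A j = k) ∧
    AvoidsFam A 𝓕 }

/-- `forbmaxK k m r 𝓕`: the maximum of `forbK k m' r 𝓕` over `m' ≤ m`. -/
noncomputable def forbmaxK (k m r : ℕ) (𝓕 : Set CMat) : ℕ :=
  sSup { x : ℕ | ∃ m' ≤ m, x = forbK k m' r 𝓕 }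

/-- `Imat ℓ a b`: the `ℓ × ℓ` matrix with `a` on the diagonal and `b` off the diagonal. -/
def Imat (ℓ a b : ℕ) : MatN ℓ ℓ := fun i j => if i = j then a else b

/-- `Tmat ℓ a b`: the `ℓ × ℓ` matrix with `a` below the diagonal and `b` on or above it. -/
def Tmat (ℓ a b : ℕ) : MatN ℓ ℓ := fun i j => if (j : ℕ) < (i : ℕ) then a else b

/-- `Tmat3 ℓ a b c`: the `ℓ × ℓ` matrix with `a` below, `b` on, and `c` above the diagonal. -/
def Tmat3 (ℓ a b c : ℕ) : MatN ℓ ℓ :=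
  fun i j => if (j : ℕ) < (i : ℕ) then a else if i = j then b else c

/-- The family `𝒯_ℓ(r)` of all `I_ℓ(a,b)` and `T_ℓ(a,b)` with `a,b ∈ {0,…,r-1}`, `a ≠ b`. -/
def TFam (ℓ r : ℕ) : Set CMat :=
  { M | ∃ a b : ℕ, a < r ∧ b < r ∧ a ≠ b ∧
      (M = ⟨ℓ, ℓ, Imat ℓ a b⟩ ∨ M = ⟨ℓ, ℓ, Tmat ℓ a b⟩) }

/-- `t·F`: the concatenation of `t` copies of `F` side by side. -/
def tcopies {k p : ℕ} (t : ℕ) (F : MatN k p) : MatN k (t * p) :=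
  fun i j => F i ⟨(j : ℕ) % p, Nat.mod_lt _ (by
    rcases Nat.eq_zero_or_pos p with h | h
    · exact absurd j.isLt (by simp [h])
    · exact h)⟩

/-- `0×1×F`: `F` with an extra row of 0's and an extra row of 1's appended. -/
def zeroOneTop {k p : ℕ} (F : MatN k p) : MatN (k + 2) p :=
  fun i j => if h : (i : ℕ) < k then F ⟨i, h⟩ j else if (i : ℕ) = k then 0 else 1

/-- `F_{a,b,c,d}`: the `(a+b+c+d) × 2` matrix with `a` rows `[1 1]`, `b` rows `[1 0]`,
`c` rows `[0 1]` and `d` rows `[0 0]`. -/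
def Fabcd (a b c d : ℕ) : MatN (a + b + c + d) 2 :=
  fun i j =>
    if (i : ℕ) < a then 1
    else if (i : ℕ) < a + b then (if (j : ℕ) = 0 then 1 else 0)
    else if (i : ℕ) < a + b + c then (if (j : ℕ) = 0 then 0 else 1)
    else 0

/-!
Group the columns by their two-support, the set of rows in which they have an entry `2`.
Deleting those rows from the columns of one group leaves a simple `(0,1)`-matrix with column
sums `k` avoiding `𝓕`, so every group has at most `forbmax_k(m, 𝓕)` columns and `d = 0` works.
The number of groups is bounded in terms of `ℓ` alone: many distinct two-supports force a
large set `R` of rows such that every `x ∈ R` has two supports differing on `R` only at `x`.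
Ramsey's theorem on `R` then yields `ℓ` rows and `ℓ` columns forming, possibly after reversing
their order, `I_ℓ(2,a)`, `I_ℓ(a,2)`, `T_ℓ(a,2)` or `T_ℓ(0,2,1)`.
-/

open Finset

def twoPatterns (ℓ : ℕ) : Set CMat :=
  (TFam ℓ 3 \ TFam ℓ 2) ∪ {⟨ℓ, ℓ, Tmat3 ℓ 0 2 1⟩}

section Patterns

variable {ℓ m n a b c : ℕ} {A : MatN m n}

theorem avoidsFam_union {𝓕 𝓖 : Set CMat} :
    AvoidsFam A (𝓕 ∪ 𝓖) ↔ AvoidsFam A 𝓕 ∧ AvoidsFam A 𝓖 := by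
  simp only [AvoidsFam, Set.mem_union, or_imp, forall_and]

theorem rmat_of_mem_TFam {r : ℕ} {M : CMat} (hM : M ∈ TFam ℓ r) : RMat r M.mat := by
  obtain ⟨a, b, ha, hb, -, rfl | rfl⟩ := hM <;> intro i j
  · simp only [Imat]; split <;> assumption
  · simp only [Tmat]; split <;> assumption

theorem Imat_mem_twoPatterns (hℓ : 2 ≤ ℓ) (ha : a < 3) (hb : b < 3) (hab : a ≠ b)
    (h2 : a = 2 ∨ b = 2) : ⟨ℓ, ℓ, Imat ℓ a b⟩ ∈ twoPatterns ℓ := by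
  refine Or.inl ⟨⟨a, b, ha, hb, hab, Or.inl rfl⟩, fun hmem => ?_⟩
  have h : RMat 2 (Imat ℓ a b) := rmat_of_mem_TFam hmem
  rcases h2 with rfl | rfl
  · simpa [Imat] using h ⟨0, by omega⟩ ⟨0, by omega⟩
  · simpa [Imat, Fin.ext_iff] using h ⟨0, by omega⟩ ⟨1, by omega⟩

theorem Tmat_mem_twoPatterns (hℓ : 2 ≤ ℓ) (ha : a < 3) (hb : b < 3) (hab : a ≠ b)
    (h2 : a = 2 ∨ b = 2) : ⟨ℓ, ℓ, Tmat ℓ a b⟩ ∈ twoPatterns ℓ := by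
  refine Or.inl ⟨⟨a, b, ha, hb, hab, Or.inr rfl⟩, fun hmem => ?_⟩
  have h : RMat 2 (Tmat ℓ a b) := rmat_of_mem_TFam hmem
  rcases h2 with rfl | rfl
  · simpa [Tmat] using h ⟨1, by omega⟩ ⟨0, by omega⟩
  · simpa [Tmat] using h ⟨0, by omega⟩ ⟨0, by omega⟩

theorem Tmat3_eq_Imat : Tmat3 ℓ a b a = Imat ℓ b a := by
  ext i j
  simp only [Tmat3, Imat]
  split_ifs <;> first | rfl | omega

theorem Tmat3_eq_Tmat : Tmat3 ℓ a b b = Tmat ℓ a b := by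
  ext i j
  simp only [Tmat3, Tmat]
  split_ifs <;> rfl

theorem Tmat3_rev_rev (i j : Fin ℓ) : Tmat3 ℓ a b c i.rev j.rev = Tmat3 ℓ c b a i j := by
  simp only [Tmat3, Fin.rev_inj, Fin.val_rev]
  split_ifs <;> first | rfl | omega

theorem IsConfig.Tmat3_swap (h : IsConfig (Tmat3 ℓ a b c) A) : IsConfig (Tmat3 ℓ c b a) A := by
  obtain ⟨f, g, hf, hg, hfg⟩ := h
  refine ⟨f ∘ Fin.rev, g ∘ Fin.rev, hf.comp Fin.rev_injective, hg.comp Fin.rev_injective,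
    fun i j => ?_⟩
  rw [← Tmat3_rev_rev]
  exact hfg _ _

theorem not_isConfig_Tmat3 (hℓ : 2 ≤ ℓ) (hA : AvoidsFam A (twoPatterns ℓ)) (ha : a < 3)
    (hb : b < 3) (hc : c < 3) (h2 : b = 2 ∨ a = 2 ∧ c = 2) (hne : ¬(a = b ∧ b = c)) :
    ¬IsConfig (Tmat3 ℓ a b c) A := by
  intro h
  by_cases hac : a = c
  · subst hac
    rw [Tmat3_eq_Imat] at h
    exact hA _ (Imat_mem_twoPatterns hℓ hb ha (by tauto) (by omega)) h
  by_cases hbc : b = c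
  · subst hbc
    rw [Tmat3_eq_Tmat] at h
    exact hA _ (Tmat_mem_twoPatterns hℓ ha hb (by tauto) (by omega)) h
  by_cases hab : a = b
  · subst hab
    replace h := h.Tmat3_swap
    rw [Tmat3_eq_Tmat] at h
    exact hA _ (Tmat_mem_twoPatterns hℓ hc ha (Ne.symm hac) (by omega)) h
  obtain ⟨rfl, rfl, rfl⟩ | ⟨rfl, rfl, rfl⟩ : (a = 0 ∧ b = 2 ∧ c = 1) ∨ (a = 1 ∧ b = 2 ∧ c = 0) := by
    omega
  · exact hA _ (Or.inr rfl) h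
  · exact hA _ (Or.inr rfl) h.Tmat3_swap

end Patterns

section Ramsey

variable {α C : Type*} [LinearOrder α] [DecidableEq C]

/-- Greedy construction: take the least element `x` of `s`, keep the largest colour class of
`χ x ·` among the remaining elements, and recurse. -/
theorem exists_endHomogeneous (χ : α → α → C) (K : Finset C) :
    ∀ (t : ℕ) (s : Finset α), (∀ x ∈ s, ∀ y ∈ s, χ x y ∈ K) → (#K + 1) ^ t ≤ #s →
      ∃ u ⊆ s, #u = t ∧ ∀ x ∈ u, ∀ y ∈ u, ∀ z ∈ u, x < y → x < z → χ x y = χ x z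
  | 0, _, _, _ => ⟨∅, empty_subset _, rfl, by simp⟩
  | t + 1, s, hχ, hs => by
    have hs0 : s.Nonempty := card_pos.1 (lt_of_lt_of_le (by positivity) hs)
    set x := s.min' hs0
    have hx : x ∈ s := min'_mem s hs0
    have hK : K.Nonempty := ⟨_, hχ x hx x hx⟩
    have hrest : #K * (#K + 1) ^ t ≤ #(s.erase x) := by
      have h1 : 1 ≤ (#K + 1) ^ t := Nat.one_le_pow _ _ (Nat.succ_pos _)
      have h2 : (#K + 1) ^ (t + 1) = #K * (#K + 1) ^ t + (#K + 1) ^ t := by ring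
      rw [card_erase_of_mem hx]
      omega
    obtain ⟨γ, -, hγ⟩ := exists_le_card_fiber_of_mul_le_card_of_maps_to
      (f := χ x) (fun y hy => hχ x hx y (mem_of_mem_erase hy)) hK hrest
    obtain ⟨u, hus, hu, hhom⟩ := exists_endHomogeneous χ K t _
      (fun y hy z hz => hχ y (mem_of_mem_erase (mem_of_mem_filter y hy))
        z (mem_of_mem_erase (mem_of_mem_filter z hz))) hγ
    have hu_mem : ∀ y ∈ u, y ≠ x ∧ y ∈ s := fun y hy => mem_erase.1 (mem_of_mem_filter y (hus hy))
    have hxu : x ∉ u := fun h => (hu_mem x h).1 rfl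
    have hgt : ∀ y ∈ insert x u, ∀ z ∈ insert x u, y < z → z ∈ u := by
      intro y hy z hz hyz
      refine (mem_insert.1 hz).resolve_left fun hzx => ?_
      have hxy : x ≤ y := by
        rcases mem_insert.1 hy with rfl | hy
        · exact le_rfl
        · exact min'_le s y (hu_mem y hy).2
      exact absurd (hzx ▸ hyz) (not_lt.2 hxy)
    refine ⟨insert x u, insert_subset hx fun y hy => (hu_mem y hy).2,
      by rw [card_insert_of_notMem hxu, hu], fun y hy z hz w hw hyz hyw => ?_⟩
    rcases mem_insert.1 hy with rfl | hy'
    · rw [(mem_filter.1 (hus (hgt _ hy z hz hyz))).2, (mem_filter.1 (hus (hgt _ hy w hw hyw))).2]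
    · exact hhom y hy' z (hgt _ hy z hz hyz) w (hgt _ hy w hw hyw) hyz hyw

/-- Ramsey's theorem for pairs: pigeonhole on the colours `χ x z` towards the largest element `z`
of an end-homogeneous set. -/
theorem exists_pairHomogeneous (χ : α → α → C) (K : Finset C) (s : Finset α) (q : ℕ)
    (hχ : ∀ x ∈ s, ∀ y ∈ s, χ x y ∈ K) (hs : (#K + 1) ^ (#K * q + 1) ≤ #s) :
    ∃ t ⊆ s, #t = q ∧ ∃ γ ∈ K, ∀ x ∈ t, ∀ y ∈ t, x < y → χ x y = γ := by
  obtain ⟨u, hus, hu, hhom⟩ := exists_endHomogeneous χ K _ s hχ hs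
  have hu0 : u.Nonempty := card_pos.1 (by omega)
  set z := u.max' hu0
  have hz : z ∈ u := max'_mem u hu0
  have hK : K.Nonempty := ⟨_, hχ z (hus hz) z (hus hz)⟩
  obtain ⟨γ, hγK, hγ⟩ := exists_le_card_fiber_of_mul_le_card_of_maps_to (s := u.erase z)
    (f := fun x => χ x z) (n := q) (fun x hx => hχ x (hus (mem_of_mem_erase hx)) z (hus hz)) hK
    (by rw [card_erase_of_mem hz, hu]; simp)
  obtain ⟨t, hts, ht⟩ := exists_subset_card_eq hγ
  refine ⟨t, fun x hx => hus (mem_of_mem_erase (mem_of_mem_filter x (hts hx))), ht, γ, hγK,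
    fun x hx y hy hxy => ?_⟩
  have hxu := mem_of_mem_filter x (hts hx)
  have hyu := mem_of_mem_erase (mem_of_mem_filter y (hts hy))
  rw [← (mem_filter.1 (hts hx)).2]
  exact hhom x (mem_of_mem_erase hxu) y hyu z hz hxy (lt_of_lt_of_le hxy (le_max' u y hyu))

end Ramsey

section TriPattern

variable {α : Type*} [LinearOrder α]

def triPattern (a b c : ℕ) (x y : α) : ℕ := if y < x then a else if x = y then b else c

theorem Tmat3_apply (ℓ a b c : ℕ) (i j : Fin ℓ) : Tmat3 ℓ a b c i j = triPattern a b c i j := by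
  simp only [Tmat3, triPattern, Fin.lt_def]

theorem triPattern_map {β : Type*} [LinearOrder β] (e : α ↪o β) (a b c : ℕ) (x y : α) :
    triPattern a b c (e x) (e y) = triPattern a b c x y := by
  simp only [triPattern, e.lt_iff_lt, e.injective.eq_iff]

theorem eq_of_triPattern_col_eq {a b c : ℕ} {x y : α} (hxy : x < y)
    (h : ∀ z, triPattern a b c z x = triPattern a b c z y) : a = b ∧ b = c := by
  have hx := h x
  have hy := h y
  simp only [triPattern, lt_irrefl, if_true, if_false, hxy, not_lt_of_gt hxy, hxy.ne,
    hxy.ne'] at hx hy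
  exact ⟨hy, hx⟩

def triRamsey (q : ℕ) : ℕ := 3 * 10 ^ (9 * q + 1)

/-- Pigeonhole on the diagonal, then Ramsey for the pairs coloured by `(M y x, M x y)`. -/
theorem exists_triPattern_homogeneous (M : α → α → ℕ) (s : Finset α) (q : ℕ)
    (hM : ∀ x ∈ s, ∀ y ∈ s, M x y < 3) (hs : triRamsey q ≤ #s) :
    ∃ t ⊆ s, #t = q ∧ ∃ a b c, a < 3 ∧ b < 3 ∧ c < 3 ∧
      ∀ x ∈ t, ∀ y ∈ t, M x y = triPattern a b c x y := by
  obtain ⟨b, hb, hdiag⟩ := exists_le_card_fiber_of_mul_le_card_of_maps_to (t := range 3)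
    (f := fun x => M x x) (fun x hx => mem_range.2 (hM x hx x hx)) (by simp)
    (by simpa [triRamsey] using hs)
  obtain ⟨t, hts, ht, γ, hγ, hhom⟩ := exists_pairHomogeneous (fun x y => (M y x, M x y))
    (range 3 ×ˢ range 3) _ q
    (fun x hx y hy => mem_product.2 ⟨mem_range.2 (hM y (mem_of_mem_filter y hy) x
      (mem_of_mem_filter x hx)), mem_range.2 (hM x (mem_of_mem_filter x hx) y
      (mem_of_mem_filter y hy))⟩)
    (by simpa using hdiag)
  obtain ⟨ha, hc⟩ := mem_product.1 hγ
  refine ⟨t, fun x hx => mem_of_mem_filter x (hts hx), ht, γ.1, b, γ.2, mem_range.1 ha,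
    mem_range.1 hb, mem_range.1 hc, fun x hx y hy => ?_⟩
  rcases lt_trichotomy y x with hyx | rfl | hxy
  · simp only [triPattern, hyx, if_true, ← hhom y hy x hx hyx]
  · simp only [triPattern, lt_irrefl, if_true, if_false, (mem_filter.1 (hts hx)).2]
  · simp only [triPattern, not_lt_of_gt hxy, hxy.ne, if_false, ← hhom x hx y hy hxy]

end TriPattern

theorem isConfig_Tmat3_of_triPattern {ℓ m n a b c : ℕ} {A : MatN m n} {t : Finset (Fin m)}
    (ht : #t = ℓ) (β : Fin m → Fin n) (hne : ¬(a = b ∧ b = c))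
    (hA : ∀ x ∈ t, ∀ y ∈ t, A x (β y) = triPattern a b c x y) :
    IsConfig (Tmat3 ℓ a b c) A := by
  set e := t.orderEmbOfFin ht
  have hentry : ∀ i j, A (e i) (β (e j)) = Tmat3 ℓ a b c i j := fun i j => by
    rw [hA _ (orderEmbOfFin_mem t ht i) _ (orderEmbOfFin_mem t ht j), triPattern_map,
      Tmat3_apply]
  have hcol : ∀ {i j : Fin ℓ}, β (e i) = β (e j) → ¬i < j := fun hij hlt =>
    hne <| eq_of_triPattern_col_eq hlt fun z => by
      rw [← Tmat3_apply, ← Tmat3_apply, ← hentry, ← hentry, hij]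
  refine ⟨e, β ∘ e, e.injective, fun i j hij => ?_, hentry⟩
  exact le_antisymm (not_lt.1 (hcol hij.symm)) (not_lt.1 (hcol hij))

/-- Take `R` of least size on which the sets of `S` are still told apart by their traces;
dropping any `x ∈ R` merges two traces, and these two sets differ on `R` exactly at `x`. -/
theorem exists_critical_set {α : Type*} [DecidableEq α] (S : Finset (Finset α)) :
    ∃ R : Finset α, #S ≤ 2 ^ #R ∧
      ∀ x ∈ R, ∃ U ∈ S, ∃ V ∈ S, x ∈ U ∧ x ∉ V ∧ U ∩ R.erase x = V ∩ R.erase x := by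
  have hsup : Set.InjOn (· ∩ S.sup id) (S : Set (Finset α)) := fun U hU V hV h => by
    have hU' : U ⊆ S.sup id := le_sup (f := id) (mem_coe.1 hU)
    have hV' : V ⊆ S.sup id := le_sup (f := id) (mem_coe.1 hV)
    simpa only [inter_eq_left.2 hU', inter_eq_left.2 hV'] using h
  obtain ⟨R, hR, hmin⟩ := (InvImage.wf Finset.card wellFounded_lt).has_min
    {R | Set.InjOn (· ∩ R) (S : Set (Finset α))} ⟨_, hsup⟩
  refine ⟨R, ?_, fun x hx => ?_⟩
  · calc #S ≤ #R.powerset :=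
          card_le_card_of_injOn (· ∩ R) (fun U _ => mem_powerset.2 inter_subset_right) hR
      _ = 2 ^ #R := card_powerset R
  have hnot : ¬Set.InjOn (· ∩ R.erase x) (S : Set (Finset α)) := fun h =>
    hmin _ h (card_erase_lt_of_mem hx)
  simp only [Set.InjOn, not_forall] at hnot
  obtain ⟨U, hU, V, hV, hUV, hne⟩ := hnot
  have hxUV : ¬(x ∈ U ↔ x ∈ V) := fun hiff => hne <| hR hU hV <| by
    ext y
    by_cases hyx : y = x
    · subst hyx; simp [hx, hiff]
    · simpa [hyx] using congrArg (y ∈ ·) hUV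
  by_cases hxU : x ∈ U
  · exact ⟨U, hU, V, hV, hxU, fun hxV => hxUV (iff_of_true hxU hxV), hUV⟩
  · exact ⟨V, hV, U, hU, by tauto, hxU, hUV.symm⟩

section TwoSupport

variable {ℓ m n : ℕ} {A : MatN m n}

def twoSupport (A : MatN m n) (j : Fin n) : Finset (Fin m) := {i | A i j = 2}

@[simp]
theorem mem_twoSupport {i : Fin m} {j : Fin n} : i ∈ twoSupport A j ↔ A i j = 2 := by
  simp [twoSupport]

/-- The `βU`-pattern is forbidden unless it is constant `2`; then the `βV`-pattern has `2`
exactly off the diagonal. -/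
theorem not_avoidsFam_of_triPattern_pair (hℓ : 2 ≤ ℓ) (hA : AvoidsFam A (twoPatterns ℓ))
    {t : Finset (Fin m)} (ht : #t = ℓ) {βU βV : Fin m → Fin n} {a b c a' b' c' : ℕ}
    (ha : a < 3) (hc : c < 3) (ha' : a' < 3) (hb' : b' < 3) (hc' : c' < 3)
    (hU : ∀ x ∈ t, ∀ y ∈ t, A x (βU y) = triPattern a b c x y)
    (hV : ∀ x ∈ t, ∀ y ∈ t, A x (βV y) = triPattern a' b' c' x y) (hb2 : b = 2) (hb'2 : b' ≠ 2)
    (hUV : ∀ x ∈ t, ∀ y ∈ t, x ≠ y → (A x (βU y) = 2 ↔ A x (βV y) = 2)) : False := by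
  obtain ⟨x, hx, y, hy, hxy⟩ : ∃ x ∈ t, ∃ y ∈ t, x < y := by
    obtain ⟨x, hx, y, hy, hne⟩ := one_lt_card.1 (by omega : 1 < #t)
    rcases lt_or_gt_of_ne hne with h | h
    exacts [⟨x, hx, y, hy, h⟩, ⟨y, hy, x, hx, h⟩]
  have hac : a = 2 ↔ a' = 2 := by
    simpa [hU y hy x hx, hV y hy x hx, triPattern, hxy] using hUV y hy x hx hxy.ne'
  have hcc : c = 2 ↔ c' = 2 := by
    simpa [hU x hx y hy, hV x hx y hy, triPattern, hxy.ne, not_lt_of_gt hxy] using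
      hUV x hx y hy hxy.ne
  by_cases hac2 : a = 2 ∧ c = 2
  · exact not_isConfig_Tmat3 hℓ hA ha' hb' hc' (Or.inr ⟨hac.1 hac2.1, hcc.1 hac2.2⟩)
      (by omega) (isConfig_Tmat3_of_triPattern ht βV (by omega) hV)
  · exact not_isConfig_Tmat3 hℓ hA ha (by omega) hc (Or.inl hb2) (by omega)
      (isConfig_Tmat3_of_triPattern ht βU (by omega) hU)

/-- The rows `R` of a critical set carry columns `U x ∋ x` and `V x ∌ x` agreeing on `R \ {x}`;
Ramsey's theorem, applied twice, makes both patterns homogeneous on `ℓ` rows of `R`. -/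
theorem card_image_twoSupport_le (hℓ : 2 ≤ ℓ) (hA3 : RMat 3 A)
    (hA : AvoidsFam A (twoPatterns ℓ)) :
    #(univ.image (twoSupport A)) ≤ 2 ^ triRamsey (triRamsey ℓ) := by
  obtain ⟨R, hSR, hcrit⟩ := exists_critical_set (univ.image (twoSupport A))
  suffices #R < triRamsey (triRamsey ℓ) from hSR.trans (Nat.pow_le_pow_right two_pos this.le)
  by_contra! hR
  choose! U hUS V hVS hxU hxV hUV using hcrit
  have hcol : ∀ W ∈ univ.image (twoSupport A), ∃ j, twoSupport A j = W := by simp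
  have : Nonempty (Fin n) := by
    obtain ⟨x, hx⟩ : R.Nonempty := card_pos.1 (lt_of_lt_of_le (by simp [triRamsey]) hR)
    exact ⟨(hcol _ (hUS x hx)).choose⟩
  choose! col hcol using hcol
  have h2U : ∀ x, ∀ y ∈ R, A x (col (U y)) = 2 ↔ x ∈ U y := fun x y hy => by
    rw [← mem_twoSupport, hcol _ (hUS y hy)]
  have h2V : ∀ x, ∀ y ∈ R, A x (col (V y)) = 2 ↔ x ∈ V y := fun x y hy => by
    rw [← mem_twoSupport, hcol _ (hVS y hy)]
  obtain ⟨t₁, ht₁R, ht₁, a, b, c, ha, -, hc, hU⟩ := exists_triPattern_homogeneous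
    (fun x y => A x (col (U y))) R _ (fun _ _ _ _ => hA3 _ _) hR
  obtain ⟨t, htt₁, ht, a', b', c', ha', hb', hc', hV⟩ := exists_triPattern_homogeneous
    (fun x y => A x (col (V y))) t₁ ℓ (fun _ _ _ _ => hA3 _ _) ht₁.ge
  have htR : t ⊆ R := htt₁.trans ht₁R
  obtain ⟨x, hx⟩ : t.Nonempty := card_pos.1 (by omega)
  have hb2 : b = 2 := by
    simpa [hU x (htt₁ hx) x (htt₁ hx), triPattern] using (h2U x x (htR hx)).2 (hxU x (htR hx))
  have hb'2 : b' ≠ 2 := by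
    simpa [hV x hx x hx, triPattern] using mt (h2V x x (htR hx)).1 (hxV x (htR hx))
  refine not_avoidsFam_of_triPattern_pair hℓ hA ht ha hc ha' hb' hc'
    (fun x hx y hy => hU x (htt₁ hx) y (htt₁ hy)) hV hb2 hb'2 fun x hx y hy hxy => ?_
  rw [h2U x y (htR hy), h2V x y (htR hy)]
  simpa [hxy, htR hx] using congrArg (x ∈ ·) (hUV y (htR hy))

end TwoSupport

theorem IsConfig.of_submatrix {k p m n m' n' : ℕ} {F : MatN k p} {A : MatN m n}
    {f : Fin m' → Fin m} {g : Fin n' → Fin n} (hf : Function.Injective f)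
    (hg : Function.Injective g) (h : IsConfig F (A.submatrix f g)) : IsConfig F A := by
  obtain ⟨f', g', hf', hg', hfg⟩ := h
  exact ⟨f ∘ f', g ∘ g', hf.comp hf', hg.comp hg', hfg⟩

theorem card_le_two_pow_of_simple {m n : ℕ} {A : MatN m n} (h2 : RMat 2 A) (hs : SimpleM A) :
    n ≤ 2 ^ m := by
  have hinj : Function.Injective fun j : Fin n => fun i : Fin m => (⟨A i j, h2 i j⟩ : Fin 2) :=
    fun j₁ j₂ h => hs j₁ j₂ fun i => congrArg Fin.val (congrFun h i)
  simpa using Fintype.card_le_of_injective _ hinj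

theorem bddAbove_forbK_set (k m : ℕ) (𝓕 : Set CMat) :
    BddAbove {n | ∃ A : MatN m n, RMat 2 A ∧ SimpleM A ∧ (∀ j, colSum A j = k) ∧
      AvoidsFam A 𝓕} :=
  ⟨2 ^ m, fun _ ⟨_, h2, hs, _⟩ => card_le_two_pow_of_simple h2 hs⟩

theorem forbK_le_forbmaxK {k m m' : ℕ} (h : m' ≤ m) (𝓕 : Set CMat) :
    forbK k m' 2 𝓕 ≤ forbmaxK k m 2 𝓕 := by
  refine le_csSup (((Set.finite_Iic m).image fun m' => forbK k m' 2 𝓕).bddAbove.mono ?_)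
    ⟨m', h, rfl⟩
  rintro _ ⟨m'', hm'', rfl⟩
  exact ⟨m'', hm'', rfl⟩

/-- Deleting the rows of `W` from the columns with two-support `W` leaves a simple
`(0,1)`-matrix with the same column sums. -/
theorem card_twoSupport_fiber_le_forbK {k m n : ℕ} {𝓕 : Set CMat} {A : MatN m n}
    (hA3 : RMat 3 A) (hAs : SimpleM A) (hcs : ∀ j, colSum A j = k) (hA : AvoidsFam A 𝓕)
    (W : Finset (Fin m)) :
    #{j | twoSupport A j = W} ≤ forbK k (m - #W) 2 𝓕 := by
  set J : Finset (Fin n) := {j | twoSupport A j = W}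
  set r := Wᶜ.orderEmbOfFin (by rw [card_compl, Fintype.card_fin] : #Wᶜ = m - #W)
  set g := J.orderEmbOfFin rfl
  have hg : ∀ j x, A x (g j) = 2 ↔ x ∈ W := fun j x => by
    rw [← mem_twoSupport, (mem_filter.1 (orderEmbOfFin_mem J rfl j)).2]
  have hr : ∀ x, x ∉ W → ∃ i, r i = x := fun x hx => by
    rw [← Set.mem_range, range_orderEmbOfFin]
    simpa using hx
  have hrW : ∀ i, r i ∉ W := fun i => mem_compl.1 (orderEmbOfFin_mem _ _ i)
  refine le_csSup (bddAbove_forbK_set _ _ _) ⟨A.submatrix r g, fun i j => ?_, fun j₁ j₂ h => ?_,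
    fun j => ?_, fun F hF hFA => hA F hF (hFA.of_submatrix r.injective g.injective)⟩
  · have hlt := hA3 (r i) (g j)
    have hne := (hg j (r i)).not.2 (hrW i)
    simp only [Matrix.submatrix_apply]
    omega
  · refine g.injective (hAs _ _ fun x => ?_)
    by_cases hx : x ∈ W
    · rw [(hg j₁ x).2 hx, (hg j₂ x).2 hx]
    · obtain ⟨i, rfl⟩ := hr x hx
      exact h i
  · rw [← hcs (g j), colSum, colSum, ← card_map r.toEmbedding]
    congr 1
    ext x
    simp only [mem_map, mem_filter, mem_univ, true_and, RelEmbedding.coe_toEmbedding]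
    refine ⟨fun ⟨i, hi, hix⟩ => hix ▸ hi, fun hx => ?_⟩
    obtain ⟨i, rfl⟩ := hr x fun hxW => by simp [(hg j x).2 hxW] at hx
    exact ⟨i, hx, rfl⟩

theorem card_le_of_avoidsFam {ℓ k m n : ℕ} (hℓ : 2 ≤ ℓ) {𝓕 : Set CMat} {A : MatN m n}
    (hA3 : RMat 3 A) (hAs : SimpleM A) (hcs : ∀ j, colSum A j = k)
    (hA : AvoidsFam A (twoPatterns ℓ ∪ 𝓕)) :
    n ≤ 2 ^ triRamsey (triRamsey ℓ) * forbmaxK k m 2 𝓕 := by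
  rw [avoidsFam_union] at hA
  calc n = #(univ : Finset (Fin n)) := (card_fin n).symm
    _ ≤ forbmaxK k m 2 𝓕 * #(univ.image (twoSupport A)) :=
      card_le_mul_card_image _ _ fun W _ =>
        (card_twoSupport_fiber_le_forbK hA3 hAs hcs hA.2 W).trans
          (forbK_le_forbmaxK (Nat.sub_le _ _) 𝓕)
    _ ≤ forbmaxK k m 2 𝓕 * 2 ^ triRamsey (triRamsey ℓ) :=
      Nat.mul_le_mul_left _ (card_image_twoSupport_le hℓ hA3 hA.1)
    _ = _ := Nat.mul_comm _ _

theorem stmt12_general (ℓ : ℕ) (hℓ : 2 ≤ ℓ) (𝓕 : Set CMat) :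
    ∃ c d : ℕ, ∀ m : ℕ, 1 ≤ m → ∀ k : ℕ, k ≤ m →
      forbK k m 3 ((TFam ℓ 3 \ TFam ℓ 2) ∪ {⟨ℓ, ℓ, Tmat3 ℓ 0 2 1⟩} ∪ 𝓕) ≤
        c * ∑ j ∈ Finset.Icc (k - d) k, forbmaxK j m 2 𝓕 := by
  refine ⟨2 ^ triRamsey (triRamsey ℓ), 0, fun m _ k _ => ?_⟩
  rw [Nat.sub_zero, Finset.Icc_self, Finset.sum_singleton]
  exact csSup_le' fun n ⟨A, hA3, hAs, hcs, hA⟩ => card_le_of_avoidsFam hℓ hA3 hAs hcs hA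

/-- For `ℓ ≥ 2` and a finite set `𝓕` of (0,1)-matrices there are
constants `c`, `d` such that for all `m ≥ 1` and `0 ≤ k ≤ m`,
`forb_k(m, 3, (𝒯_ℓ(3)\𝒯_ℓ(2)) ∪ {T_ℓ(0,2,1)} ∪ 𝓕) ≤ c · Σ_{j=max(0,k-d)}^{k} forbmax_j(m, 𝓕)`. -/
theorem stmt12 (ℓ : ℕ) (hℓ : 2 ≤ ℓ) (𝓕 : Set CMat) (hfin : 𝓕.Finite)
    (h01 : ∀ F ∈ 𝓕, RMat 2 F.mat) :
    ∃ c d : ℕ, ∀ m : ℕ, 1 ≤ m → ∀ k : ℕ, k ≤ m →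
      forbK k m 3 ((TFam ℓ 3 \ TFam ℓ 2) ∪ {⟨ℓ, ℓ, Tmat3 ℓ 0 2 1⟩} ∪ 𝓕) ≤
        c * ∑ j ∈ Finset.Icc (k - d) k, forbmaxK j m 2 𝓕 :=
  stmt12_general ℓ hℓ 𝓕
end

section
/- Let ε > 0, let ℓ ≥ 2, and let F be a (0,1)-matrix. Let A be an m-rowed simple 3-matrix with εm > 1, containing no member of 𝒯_ℓ(3) \ 𝒯_ℓ(2) as a configuration, such that every column of A contains at least one 0 and at least one 1, and every column of A has at least εm entries belonging to {0,1}. If the number of columns of A exceeds 2 · forbmax(m−2, 3, (𝒯_ℓ(3) \ 𝒯_ℓ(2)) ∪ {F}) · C(m,2)/(εm − 1), then 0×1×F ≺ A. -/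
/-!
Double counting over ordered pairs of rows: a column with `z` zeros and `o` ones, `z, o ≥ 1`,
has a `0` in row `r` and a `1` in row `s` for exactly `z * o ≥ z + o - 1 ≥ εm - 1` pairs
`(r, s)`. Hence some pair `r ≠ s` has more than `forbmax (m - 2) 3 𝓕` such columns. On these
columns rows `r` and `s` are constant, so deleting them leaves a simple 3-matrix with `m - 2`
rows, which must contain a member of `𝓕 = (𝒯_ℓ(3) \ 𝒯_ℓ(2)) ∪ {F}`. It cannot be one of
`𝒯_ℓ(3) \ 𝒯_ℓ(2)`, so it is `F`, and rows `r`, `s` extend that copy to `0×1×F`.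
-/

open Finset

section Forb

variable {m n r : ℕ}

theorem SimpleM.card_le_pow {A : MatN m n} (hA : SimpleM A) (hr : RMat r A) : n ≤ r ^ m := by
  have hinj : Function.Injective fun j : Fin n => fun i : Fin m => (⟨A i j, hr i j⟩ : Fin r) :=
    fun j₁ j₂ h => hA j₁ j₂ fun i => congrArg Fin.val (congrFun h i)
  simpa using Fintype.card_le_of_injective _ hinj

theorem le_forb {𝓕 : Set CMat} {A : MatN m n} (hr : RMat r A) (hA : SimpleM A)
    (hF : AvoidsFam A 𝓕) : n ≤ forb m r 𝓕 :=
  le_csSup ⟨r ^ m, fun _ ⟨_, hr', hB, _⟩ => hB.card_le_pow hr'⟩ ⟨A, hr, hA, hF⟩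

theorem forb_le_pow (m r : ℕ) (𝓕 : Set CMat) : forb m r 𝓕 ≤ r ^ m :=
  csSup_le' fun _ ⟨_, hr, hB, _⟩ => hB.card_le_pow hr

theorem forb_le_forbmax {m' : ℕ} (hm : m' ≤ m) (hr : 1 ≤ r) (𝓕 : Set CMat) :
    forb m' r 𝓕 ≤ forbmax m r 𝓕 := by
  refine le_csSup ⟨r ^ m, ?_⟩ ⟨m', hm, rfl⟩
  rintro _ ⟨m'', hm'', rfl⟩
  exact (forb_le_pow m'' r 𝓕).trans (Nat.pow_le_pow_right hr hm'')

end Forb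

section Config

variable {k p m n m' n' : ℕ}

theorem SimpleM.submatrix {A : MatN m n} (hA : SimpleM A) {e : Fin m' → Fin m}
    {g : Fin n' → Fin n} (hg : Function.Injective g)
    (hconst : ∀ i, i ∉ Set.range e → ∀ j₁ j₂, A i (g j₁) = A i (g j₂)) :
    SimpleM (A.submatrix e g) := by
  intro j₁ j₂ h
  refine hg (hA _ _ fun i => ?_)
  by_cases hi : i ∈ Set.range e
  · obtain ⟨i', rfl⟩ := hi
    exact h i'
  · exact hconst i hi j₁ j₂

theorem IsConfig.of_zeroOneTop {F : MatN k p} {A : MatN m n} (h : IsConfig (zeroOneTop F) A) :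
    IsConfig F A := by
  obtain ⟨f, g, hf, hg, hfg⟩ := h
  refine ⟨f ∘ Fin.castAdd 2, g, hf.comp (Fin.castAdd_injective k 2), hg, fun i j => ?_⟩
  simpa [zeroOneTop] using hfg (Fin.castAdd 2 i) j

theorem IsConfig.zeroOneTop_of_submatrix {F : MatN k p} {A : MatN m n} {e : Fin m' → Fin m}
    {g : Fin n' → Fin n} (he : Function.Injective e) (hg : Function.Injective g)
    {r s : Fin m} (hrs : r ≠ s) (her : ∀ i, e i ≠ r ∧ e i ≠ s)
    (hgr : ∀ j, A r (g j) = 0 ∧ A s (g j) = 1) (h : IsConfig F (A.submatrix e g)) :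
    IsConfig (zeroOneTop F) A := by
  obtain ⟨f, g', hf, hg', hfg⟩ := h
  refine ⟨Fin.append (e ∘ f) ![r, s], g ∘ g', ?_, hg.comp hg', fun i j => ?_⟩
  · refine Fin.append_injective_iff.2 ⟨he.comp hf, ?_, fun i j => ?_⟩
    · intro a b hab
      fin_cases a <;> fin_cases b <;> simp_all [hrs.symm]
    · fin_cases j
      exacts [(her _).1, (her _).2]
  · refine Fin.addCases (fun i => ?_) (fun i => ?_) i
    · simpa [zeroOneTop] using hfg i j
    · fin_cases i
      · simpa [zeroOneTop] using (hgr (g' j)).1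
      · simpa [zeroOneTop] using (hgr (g' j)).2

end Config

section ZeroOneCols

variable {m n : ℕ}

def zeroOneCols (A : MatN m n) (r s : Fin m) : Finset (Fin n) :=
  {j | A r j = 0 ∧ A s j = 1}

theorem zeroOneCols_self (A : MatN m n) (r : Fin m) : zeroOneCols A r r = ∅ := by
  ext j
  simp only [zeroOneCols, mem_filter, mem_univ, true_and, notMem_empty, iff_false]
  omega

theorem sum_card_zeroOneCols (A : MatN m n) :
    ∑ rs : Fin m × Fin m, #(zeroOneCols A rs.1 rs.2) =
      ∑ j, #{i | A i j = 0} * #{i | A i j = 1} := by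
  refine (sum_card_bipartiteAbove_eq_sum_card_bipartiteBelow
    (r := fun (rs : Fin m × Fin m) j => A rs.1 j = 0 ∧ A rs.2 j = 1)).trans ?_
  refine sum_congr rfl fun j _ => ?_
  rw [← card_product]
  congr 1
  ext
  simp [bipartiteBelow]

theorem exists_ne_lt_card_zeroOneCols (A : MatN m n) (B : ℕ)
    (h : 2 * m.choose 2 * B < ∑ j, #{i | A i j = 0} * #{i | A i j = 1}) :
    ∃ r s, r ≠ s ∧ B < #(zeroOneCols A r s) := by
  by_contra! hle
  have hsum : ∑ rs : Fin m × Fin m, #(zeroOneCols A rs.1 rs.2) =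
      ∑ rs ∈ univ.offDiag, #(zeroOneCols A rs.1 rs.2) := by
    refine (sum_subset (subset_univ _) fun rs _ hrs => ?_).symm
    obtain ⟨r, s⟩ := rs
    obtain rfl : r = s := by simpa using hrs
    simp [zeroOneCols_self]
  have hoff : #(univ.offDiag : Finset (Fin m × Fin m)) = 2 * m.choose 2 := by
    rw [offDiag_card, card_univ, Fintype.card_fin, Nat.choose_two_right,
      Nat.two_mul_div_two_of_even (Nat.even_mul_pred_self m), Nat.mul_sub_one]
  have hbound := sum_le_card_nsmul univ.offDiag
    (fun rs : Fin m × Fin m => #(zeroOneCols A rs.1 rs.2)) B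
    fun rs hrs => hle rs.1 rs.2 (by simpa using hrs)
  rw [← hsum, sum_card_zeroOneCols, hoff, smul_eq_mul] at hbound
  omega

theorem card_zero_or_one_le_card_zero_mul_card_one (A : MatN m n) (j : Fin n)
    (h0 : ∃ i, A i j = 0) (h1 : ∃ i, A i j = 1) :
    #{i | A i j = 0 ∨ A i j = 1} ≤ #{i | A i j = 0} * #{i | A i j = 1} + 1 := by
  have hdisj : Disjoint (α := Finset (Fin m)) {i | A i j = 0} {i | A i j = 1} :=
    disjoint_filter.2 fun i _ h0 h1 => by omega
  have hz : 0 < #{i | A i j = 0} := card_pos.2 (h0.imp fun _ hi => by simpa using hi)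
  have ho : 0 < #{i | A i j = 1} := card_pos.2 (h1.imp fun _ hi => by simpa using hi)
  rw [filter_or, card_union_of_disjoint hdisj]
  nlinarith

theorem exists_mem_isConfig_zeroOneTop {t : ℕ} {𝓕 : Set CMat} {A : MatN m n} (hA : RMat t A)
    (hsimple : SimpleM A) {r s : Fin m} (hrs : r ≠ s)
    (h : forb (m - 2) t 𝓕 < #(zeroOneCols A r s)) :
    ∃ F ∈ 𝓕, IsConfig (zeroOneTop F.mat) A := by
  have hS : #({r, s}ᶜ : Finset (Fin m)) = m - 2 := by
    rw [card_compl, card_pair hrs, Fintype.card_fin]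
  set e := ({r, s}ᶜ : Finset (Fin m)).orderEmbOfFin hS
  set g := (zeroOneCols A r s).orderEmbOfFin rfl
  have he : ∀ i, e i ≠ r ∧ e i ≠ s := fun i => by
    simpa only [mem_compl, mem_insert, mem_singleton, not_or] using orderEmbOfFin_mem _ hS i
  have hg : ∀ j, A r (g j) = 0 ∧ A s (g j) = 1 := fun j =>
    (mem_filter.1 (orderEmbOfFin_mem _ rfl j)).2
  have hsub : SimpleM (A.submatrix e g) := hsimple.submatrix g.injective fun i hi j₁ j₂ => by
    obtain rfl | rfl : i = r ∨ i = s := by simpa [e, or_iff_not_imp_right] using hi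
    · rw [(hg j₁).1, (hg j₂).1]
    · rw [(hg j₁).2, (hg j₂).2]
  by_contra! hav
  refine h.not_ge (le_forb (fun i j => hA _ _) hsub fun F hF hc => hav F hF ?_)
  exact hc.zeroOneTop_of_submatrix e.injective g.injective hrs he hg

theorem two_mul_choose_mul_lt_sum {B : ℕ} {ε : ℝ} {A : MatN m n} (hεm : 1 < ε * m)
    (h0 : ∀ j, ∃ i, A i j = 0) (h1 : ∀ j, ∃ i, A i j = 1)
    (h01 : ∀ j, ε * m ≤ (#{i | A i j = 0 ∨ A i j = 1} : ℝ))
    (hn : 2 * (B : ℝ) * m.choose 2 / (ε * m - 1) < n) :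
    2 * m.choose 2 * B < ∑ j, #{i | A i j = 0} * #{i | A i j = 1} := by
  have hcol : ∀ j, ε * m - 1 ≤ (#{i | A i j = 0} * #{i | A i j = 1} : ℝ) := fun j => by
    have hle : (#{i | A i j = 0 ∨ A i j = 1} : ℝ) ≤
        #{i | A i j = 0} * #{i | A i j = 1} + 1 := by
      exact_mod_cast card_zero_or_one_le_card_zero_mul_card_one A j (h0 j) (h1 j)
    linarith [h01 j]
  have hsum := card_nsmul_le_sum univ _ _ fun j _ => hcol j
  rw [card_univ, Fintype.card_fin, nsmul_eq_mul] at hsum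
  rw [div_lt_iff₀ (by linarith)] at hn
  have hlt : (2 * m.choose 2 * B : ℝ) < ∑ j, (#{i | A i j = 0} * #{i | A i j = 1} : ℕ) := by
    push_cast
    linarith
  exact_mod_cast hlt

end ZeroOneCols

theorem stmt13_general (ε : ℝ) (ℓ : ℕ) (k p : ℕ)
    (F : MatN k p)
    (m n : ℕ) (A : MatN m n) (hεm : 1 < ε * m)
    (hA3 : RMat 3 A) (hsimple : SimpleM A)
    (havoid : AvoidsFam A (TFam ℓ 3 \ TFam ℓ 2))
    (h0 : ∀ j : Fin n, ∃ i : Fin m, A i j = 0)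
    (h1 : ∀ j : Fin n, ∃ i : Fin m, A i j = 1)
    (h01 : ∀ j : Fin n,
      ε * m ≤ ((Finset.univ.filter fun i : Fin m => A i j = 0 ∨ A i j = 1).card : ℝ))
    (hcols : 2 * (forbmax (m - 2) 3 ((TFam ℓ 3 \ TFam ℓ 2) ∪ {⟨k, p, F⟩}) : ℝ) *
        (Nat.choose m 2 : ℝ) / (ε * m - 1) < (n : ℝ)) :
    IsConfig (zeroOneTop F) A := by
  obtain ⟨r, s, hrs, hcard⟩ :=
    exists_ne_lt_card_zeroOneCols A _ (two_mul_choose_mul_lt_sum hεm h0 h1 h01 hcols)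
  obtain ⟨F', hF', hconfig⟩ := exists_mem_isConfig_zeroOneTop hA3 hsimple hrs
    ((forb_le_forbmax le_rfl (by norm_num) _).trans_lt hcard)
  rcases hF' with hT | rfl
  · exact absurd hconfig.of_zeroOneTop (havoid F' hT)
  · exact hconfig

/-- Let `ε > 0`, `ℓ ≥ 2`, `F` a (0,1)-matrix, and `A` an `m`-rowed
simple 3-matrix with `εm > 1`, avoiding `𝒯_ℓ(3) \ 𝒯_ℓ(2)`, each column containing a 0
and a 1 and having at least `εm` entries in `{0,1}`. If `A` has more than
`2·forbmax(m-2, 3, (𝒯_ℓ(3)\𝒯_ℓ(2)) ∪ {F})·C(m,2)/(εm-1)` columns, then `0×1×F ≺ A`. -/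
theorem stmt13 (ε : ℝ) (hε : 0 < ε) (ℓ : ℕ) (hℓ : 2 ≤ ℓ) (k p : ℕ)
    (F : MatN k p) (hF : RMat 2 F)
    (m n : ℕ) (A : MatN m n) (hεm : 1 < ε * m)
    (hA3 : RMat 3 A) (hsimple : SimpleM A)
    (havoid : AvoidsFam A (TFam ℓ 3 \ TFam ℓ 2))
    (h0 : ∀ j : Fin n, ∃ i : Fin m, A i j = 0)
    (h1 : ∀ j : Fin n, ∃ i : Fin m, A i j = 1)
    (h01 : ∀ j : Fin n,
      ε * m ≤ ((Finset.univ.filter fun i : Fin m => A i j = 0 ∨ A i j = 1).card : ℝ))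
    (hcols : 2 * (forbmax (m - 2) 3 ((TFam ℓ 3 \ TFam ℓ 2) ∪ {⟨k, p, F⟩}) : ℝ) *
        (Nat.choose m 2 : ℝ) / (ε * m - 1) < (n : ℝ)) :
    IsConfig (zeroOneTop F) A :=
  stmt13_general ε ℓ k p F m n A hεm hA3 hsimple havoid h0 h1 h01 hcols
end

section
/- Let r ≥ 1. There is a constant c such that for all m ≥ 1 and all k with 0 ≤ k ≤ m: if k ∉ {r+1, r+2, m−r−2, m−r−1}, then forb_k(m, 2, {F_{1,r+1,r+1,1}}) ≤ c · m^r; and if k ∈ {r+1, r+2, m−r−2, m−r−1}, then forb_k(m, 2, {F_{1,r+1,r+1,1}}) ≤ c · m^{r+1}. -/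
/-!
Reading columns as their sets of 1-rows, a simple `k`-uniform matrix avoiding
`F_{1,r+1,r+1,1}` is a family of `k`-sets in which two members with a common element and a
common non-element differ in at most `r` elements. Complementation swaps `k` and `m - k`, so
let `2k ≤ m`; then any two meeting members also miss a common element. For `k ≤ r + 1` we
count all `k`-sets. For `k > 2r` meeting is transitive, its classes have disjoint supports and
diameter at most `2r`, and a family of diameter `2r` on `v` points has `O(v^r)` members.
For `r + 2 ≤ k ≤ 2r` meeting members share `t = k - r ≥ 2` elements: `t`-sets of large degree
are pairwise disjoint and lie in every member they meet, elements outside them have degree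
`O(m^(r-1))`, and members covered by them are unions of at most `r` of them.
-/

open Finset Function
open scoped symmDiff FinsetFamily

namespace ForbConfig

variable {α : Type*} [DecidableEq α]

lemma card_powerset_filter_card_le (V : Finset α) (z : ℕ) :
    #{S ∈ V.powerset | #S ≤ z} ≤ (z + 1) * (#V + 1) ^ z := by
  have hsplit : {S ∈ V.powerset | #S ≤ z} = (range (z + 1)).biUnion V.powersetCard := by
    ext S
    simp only [mem_filter, mem_powerset, mem_biUnion, mem_range, mem_powersetCard]
    exact ⟨fun h => ⟨#S, by omega, h.1, rfl⟩, fun ⟨i, hi, hS, hSi⟩ => ⟨hS, by omega⟩⟩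
  calc #{S ∈ V.powerset | #S ≤ z}
      ≤ ∑ i ∈ range (z + 1), #(V.powersetCard i) := hsplit ▸ card_biUnion_le
    _ ≤ ∑ _i ∈ range (z + 1), (#V + 1) ^ z := by
        refine sum_le_sum fun i hi => ?_
        rw [card_powersetCard]
        calc (#V).choose i ≤ #V ^ i := Nat.choose_le_pow _ _
          _ ≤ (#V + 1) ^ i := Nat.pow_le_pow_left (Nat.le_succ _) i
          _ ≤ (#V + 1) ^ z := Nat.pow_le_pow_right (Nat.succ_pos _) (by simp at hi; omega)
    _ = (z + 1) * (#V + 1) ^ z := by simp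

lemma card_symmDiff (A B : Finset α) : #(A ∆ B) = #(A \ B) + #(B \ A) :=
  card_union_of_disjoint disjoint_sdiff_sdiff

lemma card_le_of_card_symmDiff_le {G : Finset (Finset α)} {V : Finset α} {r : ℕ}
    (hV : ∀ A ∈ G, A ⊆ V) (hG : ∀ A ∈ G, ∀ B ∈ G, #(A ∆ B) ≤ 2 * r) :
    #G ≤ 4 ^ r * ((r + 1) * (#V + 1) ^ r) := by
  obtain rfl | ⟨B₀, hB₀⟩ := G.eq_empty_or_nonempty
  · simp
  obtain ⟨C₀, hC₀, hmax⟩ := exists_max_image G (fun C => #(C ∆ B₀)) ⟨B₀, hB₀⟩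
  set E := C₀ ∆ B₀
  -- `C` is recovered from `D = C ∆ B₀`, and `D` from its trace on `E` and the rest; since
  -- `#D ≤ #E` and `#(D ∆ E) = #(C ∆ C₀) ≤ 2r`, the rest has at most `r` elements.
  have hrest : ∀ C ∈ G, #((C ∆ B₀) \ E) ≤ r := by
    intro C hC
    have hDE : #((C ∆ B₀) ∆ E) ≤ 2 * r := by
      rw [symmDiff_symmDiff_symmDiff_comm, symmDiff_self, symmDiff_bot]
      exact hG C hC C₀ hC₀
    have h₁ := card_sdiff_add_card_inter (C ∆ B₀) E
    have h₂ := card_sdiff_add_card_inter E (C ∆ B₀)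
    rw [card_symmDiff] at hDE
    rw [inter_comm] at h₂
    have := hmax C hC
    omega
  calc #G ≤ #(E.powerset ×ˢ {S ∈ V.powerset | #S ≤ r}) := by
        refine card_le_card_of_injOn (fun C => ((C ∆ B₀) ∩ E, (C ∆ B₀) \ E)) ?_ ?_
        · intro C hC
          simp only [coe_product, Set.mem_prod, mem_coe, mem_powerset, mem_filter]
          refine ⟨inter_subset_right, fun x hx => ?_, hrest C hC⟩
          have := symmDiff_subset_union (mem_sdiff.1 hx).1
          rcases mem_union.1 this with h | h
          exacts [hV C hC h, hV B₀ hB₀ h]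
        · intro C _ C' _ h
          simp only [Prod.mk.injEq] at h
          apply symmDiff_left_injective B₀
          change C ∆ B₀ = C' ∆ B₀
          rw [← sdiff_union_inter (C ∆ B₀) E, ← sdiff_union_inter (C' ∆ B₀) E, h.1, h.2]
    _ ≤ 4 ^ r * ((r + 1) * (#V + 1) ^ r) := by
        rw [card_product, card_powerset]
        refine Nat.mul_le_mul ?_ (card_powerset_filter_card_le V r)
        calc 2 ^ #E ≤ 2 ^ (2 * r) := Nat.pow_le_pow_right (by norm_num) (hG C₀ hC₀ B₀ hB₀)
          _ = 4 ^ r := by rw [pow_mul]; norm_num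

def IntersectingPairsClose (r : ℕ) (F : Finset (Finset α)) : Prop :=
  ∀ A ∈ F, ∀ B ∈ F, (A ∩ B).Nonempty → #(A \ B) ≤ r

lemma IntersectingPairsClose.mono {F G : Finset (Finset α)} {r : ℕ}
    (hP : IntersectingPairsClose r F) (hGF : G ⊆ F) : IntersectingPairsClose r G :=
  fun A hA B hB => hP A (hGF hA) B (hGF hB)

lemma inter_nonempty_of_card_sdiff_le {A B C : Finset α} {r : ℕ} (hB : 2 * r < #B)
    (hA : #(B \ A) ≤ r) (hC : #(B \ C) ≤ r) : (A ∩ C).Nonempty := by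
  rw [nonempty_iff_ne_empty]
  intro h
  have : #B ≤ #(B \ A) + #(B \ C) :=
    calc #B = #(B \ (A ∩ C)) := by rw [h, sdiff_empty]
      _ ≤ #(B \ A) + #(B \ C) := sdiff_inter_distrib_right B A C ▸ card_union_le _ _
  omega

lemma card_le_of_pairwise_inter_nonempty {T : Finset (Finset α)} {r : ℕ}
    (hP : IntersectingPairsClose r T) (hT : ∀ B ∈ T, ∀ C ∈ T, (B ∩ C).Nonempty) :
    #T ≤ 8 ^ r * (r + 1) * #(T.sup id) ^ r := by
  obtain rfl | ⟨B₀, hB₀⟩ := T.eq_empty_or_nonempty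
  · simp
  have hsupp : 1 ≤ #(T.sup id) := by
    have h := hT B₀ hB₀ B₀ hB₀
    rw [inter_self] at h
    exact card_pos.2 (h.mono (le_sup (f := id) hB₀))
  have hdiam : ∀ B ∈ T, ∀ C ∈ T, #(B ∆ C) ≤ 2 * r := fun B hB C hC => by
    rw [card_symmDiff, two_mul]
    exact add_le_add (hP B hB C hC (hT B hB C hC)) (hP C hC B hB (hT C hC B hB))
  calc #T ≤ 4 ^ r * ((r + 1) * (#(T.sup id) + 1) ^ r) :=
        card_le_of_card_symmDiff_le (fun B hB => le_sup (f := id) hB) hdiam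
    _ ≤ 4 ^ r * ((r + 1) * (2 * #(T.sup id)) ^ r) := by gcongr; omega
    _ = 8 ^ r * (r + 1) * #(T.sup id) ^ r := by
        rw [mul_pow, show (8 : ℕ) = 4 * 2 by norm_num, mul_pow]; ring

lemma card_le_of_intersectingPairsClose_of_lt {F : Finset (Finset α)} {r : ℕ} (hr : r ≠ 0)
    (hF : ∀ A ∈ F, 2 * r < #A) (hP : IntersectingPairsClose r F) :
    #F ≤ 8 ^ r * (r + 1) * #(F.sup id) ^ r := by
  induction F using Finset.strongInduction with
  | H F ih =>
  obtain rfl | ⟨A₀, hA₀⟩ := F.eq_empty_or_nonempty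
  · simp
  have hmeet : ∀ B ∈ F, ∀ C ∈ F, ∀ D ∈ F, (B ∩ C).Nonempty → (C ∩ D).Nonempty →
      (B ∩ D).Nonempty := fun B hB C hC D hD hBC hCD =>
    inter_nonempty_of_card_sdiff_le (hF C hC) (hP C hC B hB (by rwa [inter_comm]))
      (hP C hC D hD hCD)
  set T := {B ∈ F | (B ∩ A₀).Nonempty}
  set F' := {B ∈ F | ¬(B ∩ A₀).Nonempty}
  have hA₀T : A₀ ∈ T := mem_filter.2 ⟨hA₀, by
    rw [inter_self, ← card_pos]; have := hF A₀ hA₀; omega⟩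
  have hF' : F' ⊂ F := filter_ssubset.2 ⟨A₀, hA₀, not_not.2 (mem_filter.1 hA₀T).2⟩
  have hT : #T ≤ 8 ^ r * (r + 1) * #(T.sup id) ^ r := by
    refine card_le_of_pairwise_inter_nonempty (hP.mono (filter_subset _ _)) fun B hB C hC => ?_
    simp only [T, mem_filter] at hB hC
    exact hmeet B hB.1 A₀ hA₀ C hC.1 hB.2 (by rw [inter_comm]; exact hC.2)
  have hdisj : Disjoint (T.sup id) (F'.sup id) := by
    simp only [Finset.disjoint_sup_left, Finset.disjoint_sup_right, id]
    intro B hB C hC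
    simp only [T, F', mem_filter] at hB hC
    rw [disjoint_iff_inter_eq_empty, ← not_nonempty_iff_eq_empty]
    exact fun hCB => hB.2 (hmeet B hB.1 C hC.1 A₀ hA₀ (by rwa [inter_comm]) hC.2)
  have hsub : T.sup id ∪ F'.sup id ⊆ F.sup id :=
    union_subset (sup_mono (filter_subset _ _)) (sup_mono (filter_subset _ _))
  calc #F = #T + #F' := (card_filter_add_card_filter_not _).symm
    _ ≤ 8 ^ r * (r + 1) * #(T.sup id) ^ r + 8 ^ r * (r + 1) * #(F'.sup id) ^ r :=
        add_le_add hT (ih F' hF' (fun A hA => hF A (hF'.subset hA)) (hP.mono hF'.subset))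
    _ ≤ 8 ^ r * (r + 1) * (#(T.sup id) + #(F'.sup id)) ^ r := by
        rw [← mul_add]; gcongr; exact pow_add_pow_le (Nat.zero_le _) (Nat.zero_le _) hr
    _ ≤ 8 ^ r * (r + 1) * #(F.sup id) ^ r := by
        rw [← card_union_of_disjoint hdisj]; gcongr

def IntersectingPairsShare (t : ℕ) (F : Finset (Finset α)) : Prop :=
  ∀ A ∈ F, ∀ B ∈ F, (A ∩ B).Nonempty → t ≤ #(A ∩ B)

def degree (F : Finset (Finset α)) (S : Finset α) : ℕ := #{C ∈ F | S ⊆ C}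

def heavySets (F : Finset (Finset α)) (V : Finset α) (t l : ℕ) : Finset (Finset α) :=
  {S ∈ V.powersetCard t | l < degree F S}

lemma card_mul_le_card_of_pairwiseDisjoint {𝒮 : Finset (Finset α)} {W : Finset α} {t : ℕ}
    (hd : (𝒮 : Set (Finset α)).PairwiseDisjoint id) (hS : (𝒮 : Set (Finset α)).Sized t)
    (hW : ∀ S ∈ 𝒮, S ⊆ W) : #𝒮 * t ≤ #W :=
  calc #𝒮 * t = ∑ S ∈ 𝒮, #S := (sum_const_nat fun _ h => hS h).symm
    _ = #(𝒮.biUnion id) := (card_biUnion hd).symm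
    _ ≤ #W := card_le_card (biUnion_subset.2 hW)

/-- A member covered by pairwise disjoint `t`-sets, each contained in every member it meets,
is the union of at most `k / t` of them. -/
lemma card_filter_subset_sup_le {F 𝒮 : Finset (Finset α)} {k t : ℕ} (ht : 0 < t)
    (hU : (F : Set (Finset α)).Sized k) (hd : (𝒮 : Set (Finset α)).PairwiseDisjoint id)
    (hS : (𝒮 : Set (Finset α)).Sized t) (habs : ∀ A ∈ F, ∀ S ∈ 𝒮, (A ∩ S).Nonempty → S ⊆ A) :
    #{A ∈ F | A ⊆ 𝒮.sup id} ≤ (k / t + 1) * (#𝒮 + 1) ^ (k / t) := by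
  have hrec : ∀ A ∈ {A ∈ F | A ⊆ 𝒮.sup id}, ({S ∈ 𝒮 | S ⊆ A}).sup id = A := by
    intro A hA
    rw [mem_filter] at hA
    refine (Finset.sup_le fun S hS => (mem_filter.1 hS).2).antisymm fun x hx => ?_
    obtain ⟨S, hS, hxS⟩ := mem_sup.1 (hA.2 hx)
    exact mem_sup.2 ⟨S, mem_filter.2 ⟨hS, habs A hA.1 S hS ⟨x, mem_inter.2 ⟨hx, hxS⟩⟩⟩, hxS⟩
  refine (card_le_card_of_injOn (fun A => {S ∈ 𝒮 | S ⊆ A}) (fun A hA => ?_)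
    fun A hA A' hA' h => ?_).trans (card_powerset_filter_card_le 𝒮 (k / t))
  · simp only [mem_coe, mem_filter, mem_powerset] at hA ⊢
    refine ⟨filter_subset _ _, (Nat.le_div_iff_mul_le ht).2 ?_⟩
    rw [← hU hA.1]
    exact card_mul_le_card_of_pairwiseDisjoint (hd.subset (coe_subset.2 (filter_subset _ _)))
      (hS.mono (coe_subset.2 (filter_subset _ _))) fun S hS => (mem_filter.1 hS).2
  · rw [← hrec A hA, ← hrec A' hA']
    exact congrArg (fun 𝒯 : Finset (Finset α) => 𝒯.sup id) h

section Degree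

variable {F : Finset (Finset α)} {V A S S' : Finset α} {k t μ : ℕ}

lemma degree_le (hV : ∀ A ∈ F, A ⊆ V) (hU : (F : Set (Finset α)).Sized k) (S : Finset α) :
    degree F S ≤ (k - #S + 1) * (#V + 1) ^ (k - #S) := by
  refine (card_le_card_of_injOn (· \ S) (fun C hC => ?_) fun C hC C' hC' h => ?_).trans
    (card_powerset_filter_card_le V (k - #S))
  · simp only [mem_coe, mem_filter] at hC
    simp only [mem_coe, mem_filter, mem_powerset]
    exact ⟨sdiff_subset.trans (hV C hC.1), by rw [card_sdiff_of_subset hC.2, hU hC.1]⟩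
  · simp only [mem_coe, mem_filter] at hC hC'
    rw [← union_sdiff_of_subset hC.2, ← union_sdiff_of_subset hC'.2]
    exact congrArg (S ∪ ·) h

/-- If few members containing `S` reach into `A \ S`, some member `C ⊇ S` meets `A` only
inside `S`; the `t` common elements of `A` and `C` then fill up `S`. -/
lemma subset_of_sum_degree_lt (hP : IntersectingPairsShare t F) (hA : A ∈ F) (hS : #S ≤ t)
    (hAS : (A ∩ S).Nonempty) (hdeg : ∑ y ∈ A \ S, degree F (insert y S) < degree F S) :
    S ⊆ A := by
  obtain ⟨C, hCF, hSC, hCA⟩ : ∃ C ∈ F, S ⊆ C ∧ ∀ y ∈ A \ S, y ∉ C := by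
    by_contra! h
    have hcover : {C ∈ F | S ⊆ C} ⊆ (A \ S).biUnion fun y => {C ∈ F | insert y S ⊆ C} := by
      intro C hC
      rw [mem_filter] at hC
      obtain ⟨y, hy, hyC⟩ := h C hC.1 hC.2
      exact mem_biUnion.2 ⟨y, hy, mem_filter.2 ⟨hC.1, insert_subset hyC hC.2⟩⟩
    exact hdeg.not_ge ((card_le_card hcover).trans card_biUnion_le)
  have hAC : A ∩ C = A ∩ S := by
    ext x
    simp only [mem_inter]
    exact ⟨fun ⟨hxA, hxC⟩ => ⟨hxA, by_contra fun hxS => hCA x (mem_sdiff.2 ⟨hxA, hxS⟩) hxC⟩,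
      fun ⟨hxA, hxS⟩ => ⟨hxA, hSC hxS⟩⟩
  have hshare := hP A hA C hCF (hAC ▸ hAS)
  rw [hAC] at hshare
  exact inter_eq_right.1 (eq_of_subset_of_card_le inter_subset_right (hS.trans hshare))

lemma subset_of_mem_heavySets (hU : (F : Set (Finset α)).Sized k)
    (hP : IntersectingPairsShare t F) (hμ : ∀ S : Finset α, t < #S → degree F S ≤ μ)
    (hA : A ∈ F) (hS : S ∈ heavySets F V t ((k + 1) * μ)) (hAS : (A ∩ S).Nonempty) : S ⊆ A := by
  rw [heavySets, mem_filter, mem_powersetCard] at hS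
  refine subset_of_sum_degree_lt hP hA hS.1.2.le hAS (lt_of_le_of_lt ?_ hS.2)
  calc ∑ y ∈ A \ S, degree F (insert y S) ≤ ∑ _y ∈ A \ S, μ := by
        refine sum_le_sum fun y hy => hμ _ ?_
        rw [card_insert_of_notMem (mem_sdiff.1 hy).2]
        omega
    _ ≤ (k + 1) * μ := by
        rw [sum_const, smul_eq_mul]
        exact Nat.mul_le_mul_right _ ((card_le_card sdiff_subset).trans (hU hA).le |>.trans
          (Nat.le_succ k))

/-- Two heavy sets sharing an element `x` would lie in all members containing either of
them, but their union has more than `t` elements and hence small degree. -/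
lemma pairwiseDisjoint_heavySets (hU : (F : Set (Finset α)).Sized k)
    (hP : IntersectingPairsShare t F) (hμ : ∀ S : Finset α, t < #S → degree F S ≤ μ) :
    (heavySets F V t ((k + 1) * μ) : Set (Finset α)).PairwiseDisjoint id := by
  intro S hS S' hS' hne
  by_contra hd
  obtain ⟨x, hxS, hxS'⟩ := not_disjoint_iff.1 hd
  have hsub : {C ∈ F | S' ⊆ C} ⊆ {C ∈ F | S ∪ S' ⊆ C} := fun C hC => by
    rw [mem_filter] at hC ⊢
    exact ⟨hC.1, union_subset
      (subset_of_mem_heavySets hU hP hμ hC.1 hS ⟨x, mem_inter.2 ⟨hC.2 hxS', hxS⟩⟩) hC.2⟩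
  rw [mem_coe, heavySets, mem_filter, mem_powersetCard] at hS hS'
  have hunion : t < #(S ∪ S') := by
    by_contra! hle
    have h₁ : S = S ∪ S' := eq_of_subset_of_card_le subset_union_left (hle.trans hS.1.2.ge)
    exact hne (eq_of_subset_of_card_le (h₁ ▸ subset_union_right)
      (hS.1.2.trans hS'.1.2.symm).le).symm
  have hle : degree F S' ≤ μ := (card_le_card hsub).trans (hμ _ hunion)
  have : μ ≤ (k + 1) * μ := Nat.le_mul_of_pos_left μ k.succ_pos
  have := hS'.2
  omega

/-- The members through an element `x` lying in no heavy set are sorted by their trace on one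
of them; each trace has at least `t` elements, contains `x`, and so has small degree. -/
lemma degree_singleton_le (hV : ∀ A ∈ F, A ⊆ V) (hU : (F : Set (Finset α)).Sized k)
    (hP : IntersectingPairsShare t F) (hμ : ∀ S : Finset α, t < #S → degree F S ≤ μ) {x : α}
    (hx : x ∉ (heavySets F V t ((k + 1) * μ)).sup id) :
    degree F {x} ≤ 2 ^ k * ((k + 1) * μ) := by
  unfold degree
  obtain h | ⟨B₀, hB₀⟩ := ({C ∈ F | {x} ⊆ C}).eq_empty_or_nonempty
  · rw [h, card_empty]
    exact Nat.zero_le _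
  rw [mem_filter, singleton_subset_iff] at hB₀
  calc #{C ∈ F | {x} ⊆ C}
      = ∑ S ∈ B₀.powerset, #{C ∈ {C ∈ F | {x} ⊆ C} | C ∩ B₀ = S} :=
        card_eq_sum_card_fiberwise fun C _ => mem_powerset.2 inter_subset_right
    _ ≤ ∑ _S ∈ B₀.powerset, (k + 1) * μ := by
        refine sum_le_sum fun S hS => ?_
        obtain h | ⟨C₀, hC₀⟩ := ({C ∈ {C ∈ F | {x} ⊆ C} | C ∩ B₀ = S}).eq_empty_or_nonempty
        · rw [h, card_empty]
          exact Nat.zero_le _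
        simp only [mem_filter, singleton_subset_iff] at hC₀
        obtain ⟨⟨hC₀F, hxC₀⟩, rfl⟩ := hC₀
        have hfib : #{C ∈ {C ∈ F | {x} ⊆ C} | C ∩ B₀ = C₀ ∩ B₀} ≤ degree F (C₀ ∩ B₀) :=
          card_le_card fun C hC => by
            simp only [mem_filter] at hC ⊢
            exact ⟨hC.1.1, hC.2 ▸ inter_subset_left⟩
        have hxS : x ∈ C₀ ∩ B₀ := mem_inter.2 ⟨hxC₀, hB₀.2⟩
        refine hfib.trans ?_
        rcases (hP C₀ hC₀F B₀ hB₀.1 ⟨x, hxS⟩).eq_or_lt with h | h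
        · by_contra! hheavy
          exact hx (mem_sup.2 ⟨_, mem_filter.2 ⟨mem_powersetCard.2
            ⟨inter_subset_right.trans (hV B₀ hB₀.1), h.symm⟩, hheavy⟩, hxS⟩)
        · exact (hμ _ h).trans (Nat.le_mul_of_pos_left μ k.succ_pos)
    _ = 2 ^ k * ((k + 1) * μ) := by rw [sum_const, card_powerset, hU hB₀.1, smul_eq_mul]

lemma card_filter_not_subset_sup_heavySets_le (hV : ∀ A ∈ F, A ⊆ V)
    (hU : (F : Set (Finset α)).Sized k) (hP : IntersectingPairsShare t F)
    (hμ : ∀ S : Finset α, t < #S → degree F S ≤ μ) :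
    #{A ∈ F | ¬A ⊆ (heavySets F V t ((k + 1) * μ)).sup id} ≤ #V * (2 ^ k * ((k + 1) * μ)) := by
  set light := V \ (heavySets F V t ((k + 1) * μ)).sup id
  have hsub : {A ∈ F | ¬A ⊆ (heavySets F V t ((k + 1) * μ)).sup id} ⊆
      light.biUnion fun x => {C ∈ F | {x} ⊆ C} := by
    intro A hA
    obtain ⟨hAF, hA⟩ := mem_filter.1 hA
    obtain ⟨x, hxA, hx⟩ := not_subset.1 hA
    exact mem_biUnion.2 ⟨x, mem_sdiff.2 ⟨hV A hAF hxA, hx⟩,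
      mem_filter.2 ⟨hAF, singleton_subset_iff.2 hxA⟩⟩
  calc _ ≤ ∑ x ∈ light, degree F {x} := (card_le_card hsub).trans card_biUnion_le
    _ ≤ ∑ _x ∈ light, 2 ^ k * ((k + 1) * μ) :=
        sum_le_sum fun x hx => degree_singleton_le hV hU hP hμ (mem_sdiff.1 hx).2
    _ ≤ #V * (2 ^ k * ((k + 1) * μ)) := by
        rw [sum_const, smul_eq_mul]
        exact Nat.mul_le_mul_right _ (card_le_card sdiff_subset)

end Degree

lemma card_le_of_intersectingPairsShare {F : Finset (Finset α)} {V : Finset α} {r t : ℕ}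
    (hV : ∀ A ∈ F, A ⊆ V) (hU : (F : Set (Finset α)).Sized (r + t))
    (hP : IntersectingPairsShare t F) (ht : 2 ≤ t) (htr : t ≤ r) :
    #F ≤ (4 ^ r * ((2 * r + 1) * r) + (r + 1)) * (#V + 1) ^ r := by
  set v := #V
  set μ := r * (v + 1) ^ (r - 1)
  have hμ : ∀ S : Finset α, t < #S → degree F S ≤ μ := fun S hS =>
    (degree_le hV hU S).trans
      (Nat.mul_le_mul (by omega) (Nat.pow_le_pow_right (Nat.succ_pos v) (by omega)))
  set heavy := heavySets F V t ((r + t + 1) * μ)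
  have hd : (heavy : Set (Finset α)).PairwiseDisjoint id := pairwiseDisjoint_heavySets hU hP hμ
  have hsized : (heavy : Set (Finset α)).Sized t := fun S hS =>
    (mem_powersetCard.1 (mem_filter.1 hS).1).2
  have hcovered : #{A ∈ F | A ⊆ heavy.sup id} ≤ (r + 1) * (v + 1) ^ r := by
    have hkt : (r + t) / t ≤ r := Nat.div_le_of_le_mul (by nlinarith)
    have hcard : #heavy ≤ v := by
      have := card_mul_le_card_of_pairwiseDisjoint hd hsized fun S hS =>
        (mem_powersetCard.1 (mem_filter.1 hS).1).1
      nlinarith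
    refine (card_filter_subset_sup_le (by omega) hU hd hsized fun A hA S hS =>
      subset_of_mem_heavySets hU hP hμ hA hS).trans ?_
    exact Nat.mul_le_mul (by omega) ((Nat.pow_le_pow_left (by omega) _).trans
      (Nat.pow_le_pow_right (Nat.succ_pos v) hkt))
  have hpow : v * (v + 1) ^ (r - 1) ≤ (v + 1) ^ r := by
    calc v * (v + 1) ^ (r - 1) ≤ (v + 1) * (v + 1) ^ (r - 1) := by gcongr; omega
      _ = (v + 1) ^ r := by rw [← pow_succ', Nat.sub_add_cancel (by omega)]
  calc #F = #{A ∈ F | A ⊆ heavy.sup id} + #{A ∈ F | ¬A ⊆ heavy.sup id} :=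
        (card_filter_add_card_filter_not _).symm
    _ ≤ (r + 1) * (v + 1) ^ r + v * (2 ^ (r + t) * ((r + t + 1) * μ)) :=
        add_le_add hcovered (card_filter_not_subset_sup_heavySets_le hV hU hP hμ)
    _ = (r + 1) * (v + 1) ^ r + 2 ^ (r + t) * (r + t + 1) * r * (v * (v + 1) ^ (r - 1)) := by ring
    _ ≤ (r + 1) * (v + 1) ^ r + 2 ^ (2 * r) * (2 * r + 1) * r * (v + 1) ^ r := by
        gcongr
        · norm_num
        · omega
        · omega
    _ = (4 ^ r * ((2 * r + 1) * r) + (r + 1)) * (v + 1) ^ r := by rw [pow_mul]; ring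

section IsF1rr1Free

variable [Fintype α] {F : Finset (Finset α)} {k r : ℕ}

/-- The columns of a simple `(0,1)`-matrix avoid `F_{1,r+1,r+1,1}` exactly when their supports
form an `IsF1rr1Free r` family. -/
def IsF1rr1Free (r : ℕ) (F : Finset (Finset α)) : Prop :=
  ∀ A ∈ F, ∀ B ∈ F, (A ∩ B).Nonempty → (Aᶜ ∩ Bᶜ).Nonempty → #(A \ B) ≤ r ∨ #(B \ A) ≤ r

lemma IsF1rr1Free.compls (hF : IsF1rr1Free r F) : IsF1rr1Free r Fᶜˢ := by
  intro A hA B hB hAB hAB'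
  rw [mem_compls] at hA hB
  simpa only [compl_sdiff_compl, or_comm] using
    hF _ hA _ hB hAB' (by simpa only [compl_compl] using hAB)

lemma IsF1rr1Free.intersectingPairsClose (hU : (F : Set (Finset α)).Sized k)
    (h2k : 2 * k ≤ Fintype.card α) (hF : IsF1rr1Free r F) : IntersectingPairsClose r F := by
  intro A hA B hB hAB
  have hunion : #(A ∪ B) < #(univ : Finset α) := by
    have := card_union_add_card_inter A B
    have := hAB.card_pos
    rw [hU hA, hU hB] at *
    rw [card_univ]
    omega
  obtain ⟨y, -, hy⟩ := exists_mem_notMem_of_card_lt_card hunion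
  rcases hF A hA B hB hAB ⟨y, by simpa [not_or] using hy⟩ with h | h
  · exact h
  · rwa [card_sdiff_comm (by rw [hU hA, hU hB])]

def sizeConst (r : ℕ) : ℕ := 4 ^ r * ((2 * r + 1) * r) + (r + 1) + 8 ^ r * (r + 1)

lemma card_le_of_isF1rr1Free_of_two_mul_le (hr : r ≠ 0) (hU : (F : Set (Finset α)).Sized k)
    (hF : IsF1rr1Free r F) (hk : k ≠ r + 1) (h2k : 2 * k ≤ Fintype.card α) :
    #F ≤ sizeConst r * (Fintype.card α + 1) ^ r := by
  set m := Fintype.card α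
  rcases le_or_gt k r with hkr | hkr
  · calc #F ≤ m.choose k := hU.card_le
      _ ≤ m ^ k := Nat.choose_le_pow _ _
      _ ≤ (m + 1) ^ r :=
          (Nat.pow_le_pow_left m.le_succ k).trans (Nat.pow_le_pow_right m.succ_pos hkr)
      _ ≤ sizeConst r * (m + 1) ^ r := Nat.le_mul_of_pos_left _ (by unfold sizeConst; omega)
  have hP := hF.intersectingPairsClose hU h2k
  rcases le_or_gt k (2 * r) with hk2 | hk2
  · have hU' : (F : Set (Finset α)).Sized (r + (k - r)) := by rwa [Nat.add_sub_cancel' (by omega)]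
    have hshare : IntersectingPairsShare (k - r) F := fun A hA B hB hAB => by
      have := hP A hA B hB hAB
      have := card_sdiff_add_card_inter A B
      rw [hU hA] at this
      omega
    calc #F ≤ (4 ^ r * ((2 * r + 1) * r) + (r + 1)) * (#(univ : Finset α) + 1) ^ r :=
          card_le_of_intersectingPairsShare (fun A _ => subset_univ A) hU' hshare (by omega)
            (by omega)
      _ ≤ sizeConst r * (m + 1) ^ r := by
          rw [card_univ]
          exact Nat.mul_le_mul_right _ (Nat.le_add_right _ _)
  · calc #F ≤ 8 ^ r * (r + 1) * #(F.sup id) ^ r :=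
          card_le_of_intersectingPairsClose_of_lt hr (fun A hA => hU hA ▸ hk2) hP
      _ ≤ sizeConst r * (m + 1) ^ r := by
          unfold sizeConst
          gcongr
          · omega
          · exact card_le_univ _ |>.trans m.le_succ

theorem card_le_of_isF1rr1Free (hr : r ≠ 0) (hU : (F : Set (Finset α)).Sized k)
    (hF : IsF1rr1Free r F) (hk : k ≠ r + 1) (hk' : Fintype.card α - k ≠ r + 1) :
    #F ≤ sizeConst r * (Fintype.card α + 1) ^ r := by
  rcases le_or_gt (2 * k) (Fintype.card α) with h | h
  · exact card_le_of_isF1rr1Free_of_two_mul_le hr hU hF hk h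
  · rw [← card_compls]
    exact card_le_of_isF1rr1Free_of_two_mul_le hr hU.compls hF.compls hk' (by omega)

theorem card_le_mul_pow_of_isF1rr1Free (hr : r ≠ 0) (hU : (F : Set (Finset α)).Sized k)
    (hF : IsF1rr1Free r F) (hm : 1 ≤ Fintype.card α) :
    (k ≠ r + 1 → Fintype.card α - k ≠ r + 1 →
      #F ≤ 2 ^ r * sizeConst r * Fintype.card α ^ r) ∧
    #F ≤ 2 ^ r * sizeConst r * Fintype.card α ^ (r + 1) := by
  set m := Fintype.card α
  have hmain : k ≠ r + 1 → m - k ≠ r + 1 → #F ≤ 2 ^ r * sizeConst r * m ^ r := fun hk hk' =>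
    calc #F ≤ sizeConst r * (m + 1) ^ r := card_le_of_isF1rr1Free hr hU hF hk hk'
      _ ≤ sizeConst r * (2 * m) ^ r := by gcongr; omega
      _ = 2 ^ r * sizeConst r * m ^ r := by ring
  have hc : 1 ≤ 2 ^ r * sizeConst r := Nat.mul_pos (by positivity) (by unfold sizeConst; omega)
  refine ⟨hmain, ?_⟩
  by_cases hk : k = r + 1
  · calc #F ≤ m.choose k := hU.card_le
      _ ≤ m ^ (r + 1) := hk ▸ Nat.choose_le_pow _ _
      _ ≤ 2 ^ r * sizeConst r * m ^ (r + 1) := Nat.le_mul_of_pos_left _ hc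
  by_cases hk' : m - k = r + 1
  · calc #F = #Fᶜˢ := by rw [card_compls]
      _ ≤ m.choose (m - k) := hU.compls.card_le
      _ ≤ m ^ (r + 1) := hk' ▸ Nat.choose_le_pow _ _
      _ ≤ 2 ^ r * sizeConst r * m ^ (r + 1) := Nat.le_mul_of_pos_left _ hc
  · exact (hmain hk hk').trans (Nat.mul_le_mul_left _ (Nat.pow_le_pow_right hm r.le_succ))

end IsF1rr1Free

lemma isConfig_Fabcd {a b c d m n : ℕ} {A : MatN m n} {j₁ j₂ : Fin n} (hj : j₁ ≠ j₂)
    {e₁ : Fin a → Fin m} {e₂ : Fin b → Fin m} {e₃ : Fin c → Fin m} {e₄ : Fin d → Fin m}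
    (he₁ : Injective e₁) (he₂ : Injective e₂) (he₃ : Injective e₃) (he₄ : Injective e₄)
    (h₁ : ∀ i, A (e₁ i) j₁ = 1 ∧ A (e₁ i) j₂ = 1) (h₂ : ∀ i, A (e₂ i) j₁ = 1 ∧ A (e₂ i) j₂ = 0)
    (h₃ : ∀ i, A (e₃ i) j₁ = 0 ∧ A (e₃ i) j₂ = 1) (h₄ : ∀ i, A (e₄ i) j₁ = 0 ∧ A (e₄ i) j₂ = 0) :
    IsConfig (Fabcd a b c d) A := by
  have h₁₂ : ∀ i, A (Fin.append e₁ e₂ i) j₁ = 1 :=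
    Fin.addCases (fun i => by simp [h₁]) (fun i => by simp [h₂])
  have h₁₂₃ : ∀ i, A (Fin.append (Fin.append e₁ e₂) e₃ i) j₁ = 1 ∨
      A (Fin.append (Fin.append e₁ e₂) e₃ i) j₂ = 1 :=
    Fin.addCases (fun i => by simp [h₁₂]) (fun i => by simp [h₃])
  refine ⟨Fin.append (Fin.append (Fin.append e₁ e₂) e₃) e₄, ![j₁, j₂], ?_, ?_, ?_⟩
  · refine Fin.append_injective_iff.2 ⟨Fin.append_injective_iff.2
      ⟨Fin.append_injective_iff.2 ⟨he₁, he₂, fun i i' h => ?_⟩, he₃, fun i i' h => ?_⟩,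
      he₄, fun i i' h => ?_⟩
    · simpa [h₁, h₂] using congrArg (A · j₂) h
    · simpa [h₁₂, h₃] using congrArg (A · j₁) h
    · rcases h₁₂₃ i with h' | h' <;> simp [h, h₄] at h'
  · intro j j' h
    fin_cases j <;> fin_cases j' <;> simp_all [eq_comm]
  · intro i j
    fin_cases j <;>
    · refine Fin.addCases (Fin.addCases (Fin.addCases (fun i => ?_) fun i => ?_) fun i => ?_)
        (fun i => ?_) i <;> simp [Fabcd, h₁, h₂, h₃, h₄, add_assoc]

lemma exists_isF1rr1Free_of_avoidsFam {m n k r : ℕ} {A : MatN m n} (h01 : RMat 2 A)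
    (hs : SimpleM A) (hk : ∀ j, colSum A j = k)
    (hav : AvoidsFam A {⟨1 + (r + 1) + (r + 1) + 1, 2, Fabcd 1 (r + 1) (r + 1) 1⟩}) :
    ∃ F : Finset (Finset (Fin m)), #F = n ∧ (F : Set (Finset (Fin m))).Sized k ∧
      IsF1rr1Free r F := by
  set S : Fin n → Finset (Fin m) := fun j => {i | A i j = 1}
  have hone : ∀ {i j}, i ∈ S j → A i j = 1 := fun h => (mem_filter.1 h).2
  have hzero : ∀ {i j}, i ∉ S j → A i j = 0 := fun {i j} h => by
    have := h01 i j
    have : A i j ≠ 1 := fun h' => h (mem_filter.2 ⟨mem_univ i, h'⟩)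
    omega
  have hinj : Injective S := fun j₁ j₂ h => hs j₁ j₂ fun i => by
    by_cases hi : i ∈ S j₁
    · rw [hone hi, hone (h ▸ hi)]
    · rw [hzero hi, hzero (h ▸ hi)]
  have hemb : ∀ {P : Finset (Fin m)}, r < #P →
      ∃ e : Fin (r + 1) → Fin m, Injective e ∧ ∀ i, e i ∈ P :=
    fun {P} hP => ⟨fun i => P.orderEmbOfFin rfl (Fin.castLE hP i),
      (P.orderEmbOfFin rfl).injective.comp (Fin.castLE_injective _),
      fun i => P.orderEmbOfFin_mem rfl _⟩
  refine ⟨univ.image S, by rw [card_image_of_injective _ hinj, card_univ, Fintype.card_fin],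
    fun B hB => ?_, fun B₁ hB₁ B₂ hB₂ hmeet hmiss => ?_⟩
  · obtain ⟨j, -, rfl⟩ := mem_image.1 hB
    exact hk j
  obtain ⟨j₁, -, rfl⟩ := mem_image.1 hB₁
  obtain ⟨j₂, -, rfl⟩ := mem_image.1 hB₂
  by_contra! hbig
  obtain ⟨x, hx⟩ := hmeet
  obtain ⟨y, hy⟩ := hmiss
  simp only [mem_inter, mem_compl] at hx hy
  have hj : j₁ ≠ j₂ := by
    rintro rfl
    simp at hbig
  obtain ⟨e₂, he₂, he₂S⟩ := hemb hbig.1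
  obtain ⟨e₃, he₃, he₃S⟩ := hemb hbig.2
  refine hav _ rfl (isConfig_Fabcd hj (e₁ := fun _ => x) (e₄ := fun _ => y)
    (injective_of_subsingleton _) he₂ he₃ (injective_of_subsingleton _)
    (fun _ => ⟨hone hx.1, hone hx.2⟩) (fun i => ?_) (fun i => ?_)
    (fun _ => ⟨hzero hy.1, hzero hy.2⟩))
  · exact ⟨hone (mem_sdiff.1 (he₂S i)).1, hzero (mem_sdiff.1 (he₂S i)).2⟩
  · exact ⟨hzero (mem_sdiff.1 (he₃S i)).2, hone (mem_sdiff.1 (he₃S i)).1⟩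

lemma forbK_le {k m r N : ℕ} {𝓕 : Set CMat}
    (h : ∀ n (A : MatN m n), RMat r A → SimpleM A → (∀ j, colSum A j = k) → AvoidsFam A 𝓕 →
      n ≤ N) :
    forbK k m r 𝓕 ≤ N :=
  csSup_le' fun n ⟨A, hA, hs, hk, hav⟩ => h n A hA hs hk hav

lemma card_le_mul_pow_of_avoidsFam {m n k r : ℕ} (hr : r ≠ 0) (hm : 1 ≤ m) {A : MatN m n}
    (h01 : RMat 2 A) (hs : SimpleM A) (hk : ∀ j, colSum A j = k)
    (hav : AvoidsFam A {⟨1 + (r + 1) + (r + 1) + 1, 2, Fabcd 1 (r + 1) (r + 1) 1⟩}) :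
    (k ≠ r + 1 → m - k ≠ r + 1 → n ≤ 2 ^ r * sizeConst r * m ^ r) ∧
      n ≤ 2 ^ r * sizeConst r * m ^ (r + 1) := by
  obtain ⟨F, rfl, hU, hF⟩ := exists_isF1rr1Free_of_avoidsFam h01 hs hk hav
  simpa using card_le_mul_pow_of_isF1rr1Free hr hU hF (by simpa using hm)

end ForbConfig

/-- For `r ≥ 1` there is a constant `c` such that for all `m ≥ 1` and
`k ≤ m`: if `k ∉ {r+1, r+2, m-r-2, m-r-1}` then
`forb_k(m, 2, {F_{1,r+1,r+1,1}}) ≤ c·m^r`, and if `k ∈ {r+1, r+2, m-r-2, m-r-1}` then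
`forb_k(m, 2, {F_{1,r+1,r+1,1}}) ≤ c·m^{r+1}`. -/
theorem stmt15 (r : ℕ) (hr : 1 ≤ r) :
    ∃ c : ℕ, ∀ m : ℕ, 1 ≤ m → ∀ k : ℕ, k ≤ m →
      ((k ≠ r + 1 ∧ k ≠ r + 2 ∧ k ≠ m - r - 2 ∧ k ≠ m - r - 1) →
        forbK k m 2 {⟨1 + (r + 1) + (r + 1) + 1, 2, Fabcd 1 (r + 1) (r + 1) 1⟩} ≤
          c * m ^ r) ∧
      ((k = r + 1 ∨ k = r + 2 ∨ k = m - r - 2 ∨ k = m - r - 1) →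
        forbK k m 2 {⟨1 + (r + 1) + (r + 1) + 1, 2, Fabcd 1 (r + 1) (r + 1) 1⟩} ≤
          c * m ^ (r + 1)) := by
  refine ⟨2 ^ r * ForbConfig.sizeConst r, fun m hm k hkm =>
    ⟨fun ⟨hk, _, _, hk'⟩ => ?_, fun _ => ?_⟩⟩
  · exact ForbConfig.forbK_le fun n A h01 hs hcol hav =>
      (ForbConfig.card_le_mul_pow_of_avoidsFam (by omega) hm h01 hs hcol hav).1 hk (by omega)
  · exact ForbConfig.forbK_le fun n A h01 hs hcol hav =>
      (ForbConfig.card_le_mul_pow_of_avoidsFam (by omega) hm h01 hs hcol hav).2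
end

section
/- Let ℓ ≥ 2 and b ≥ 1. There is a constant C (depending only on ℓ and b) such that every m-rowed 3-matrix M satisfying: (i) there are no two columns i, j of M and b rows on which column i has entry 1 and column j has entry 0; (ii) whenever i < j, column i of M contains strictly more 1's than column j; and (iii) M contains no member of 𝒯_ℓ(3) \ 𝒯_ℓ(2) as a configuration, has fewer than C columns. -/
/-!
For columns `p < q` at distance at least `b`, the column sums drop by at least `b`, so at least
`b` rows have a `1` in column `p` and no `1` in column `q`; by (i) one of them has a `2` there.
Take `N` columns pairwise `b` apart and such a witness row for each pair of them. Colour a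
triple of these columns by the entries that the witness row of each two of them has in the third
one; Ramsey's theorem for triples gives `L + 1 = 2ℓ + b + 1` columns on which the witness row of
`(u, v)` reads `x … x 1 y … y 2 z … z`, with its `1` in column `u` and its `2` in column `v`.
If `y ≠ 2`, the rows `(0, v)` form a `[1 0]`-block violating (i) (when `y = 0` or `z = 0`), or
`I_ℓ(2,1)` or `T_ℓ(1,2)`. If `y = 2`, the rows `(u, L)` form `T_ℓ(0,2)`, `T_ℓ(1,2)` or `I_ℓ(1,2)`,
according to `x`. Each of these lies in `𝒯_ℓ(3) \ 𝒯_ℓ(2)`.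
-/

open Finset Function

universe u v

section Ramsey

variable {α : Type u} {κ : Type v} [LinearOrder α]

/-- The invariant of the Erdős–Rado proof of Ramsey's theorem: `X` is the part chosen so far,
`R` the reservoir from which it is extended. -/
def IsEndHomogeneous (χ : α → α → α → κ) (X R : Finset α) : Prop :=
  (∀ x ∈ X, ∀ r ∈ R, x < r) ∧
    ∀ p ∈ X, ∀ q ∈ X, p < q → ∀ r ∈ X ∪ R, ∀ r' ∈ X ∪ R, q < r → q < r' → χ p q r = χ p q r'

theorem IsEndHomogeneous.exists_insert [Fintype κ] {χ : α → α → α → κ} {X R : Finset α}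
    (h : IsEndHomogeneous χ X R) {Q : ℕ} (hR : Fintype.card κ ^ #X * Q + 1 < #R) :
    ∃ a ∈ R, ∃ R' ⊆ R, Q < #R' ∧ IsEndHomogeneous χ (insert a X) R' := by
  classical
  have hne : R.Nonempty := card_pos.mp (by omega)
  set a := R.min' hne
  have ha : a ∈ R := R.min'_mem hne
  obtain ⟨g, -, hg⟩ := exists_lt_card_fiber_of_mul_lt_card_of_maps_to
    (s := R.erase a) (t := (univ : Finset (X → κ))) (f := fun s p => χ p a s) (n := Q)
    (fun _ _ => mem_univ _) (by simpa [card_erase_of_mem ha] using by omega)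
  set R' := {s ∈ R.erase a | (fun p : X => χ p a s) = g}
  have hR'R : R' ⊆ R := (filter_subset _ _).trans (erase_subset _ _)
  have a_lt : ∀ r ∈ R', a < r := fun r hr =>
    have hr := (mem_erase.mp (mem_filter.mp hr).1)
    lt_of_le_of_ne (R.min'_le r hr.2) (Ne.symm hr.1)
  have hsep : ∀ x ∈ insert a X, ∀ r ∈ R', x < r := by
    intro x hx r hr
    rcases mem_insert.mp hx with rfl | hx
    exacts [a_lt r hr, h.1 x hx r (hR'R hr)]
  refine ⟨a, ha, R', hR'R, hg, hsep, fun p hp q hq hpq r hr r' hr' hqr hqr' => ?_⟩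
  have hsub : insert a X ∪ R' ⊆ X ∪ R :=
    union_subset (insert_subset (mem_union_right _ ha) subset_union_left)
      (hR'R.trans subset_union_right)
  rcases mem_insert.mp hq with rfl | hqX
  · have hpX : p ∈ X := (mem_insert.mp hp).resolve_left hpq.ne
    have above : ∀ s ∈ insert a X ∪ R', a < s → s ∈ R' := fun s hs has =>
      (mem_union.mp hs).resolve_left fun hs' => (mem_insert.mp hs').elim has.ne'
        fun hsX => (h.1 s hsX a ha).not_gt has
    have hr := (mem_filter.mp (above r hr hqr)).2
    have hr' := (mem_filter.mp (above r' hr' hqr')).2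
    exact congrFun (hr.trans hr'.symm) ⟨p, hpX⟩
  · have hpX : p ∈ X := (mem_insert.mp hp).resolve_left fun hpa =>
      (hpq.trans (h.1 q hqX a ha)).ne hpa
    exact h.2 p hpX q hqX hpq r (hsub hr) r' (hsub hr') hqr hqr'

end Ramsey

theorem exists_isEndHomogeneous (κ : Type v) [Fintype κ] (T Q : ℕ) :
    ∃ N, ∀ {α : Type u} [LinearOrder α] (χ : α → α → α → κ) (S : Finset α), N ≤ #S →
      ∃ X ⊆ S, ∃ R ⊆ S, #X = T ∧ Q < #R ∧ IsEndHomogeneous χ X R := by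
  induction T generalizing Q with
  | zero =>
    exact ⟨Q + 1, fun χ S hS => ⟨∅, empty_subset _, S, subset_rfl, card_empty, hS,
      by simp [IsEndHomogeneous]⟩⟩
  | succ T ih =>
    obtain ⟨N, hN⟩ := ih (Fintype.card κ ^ T * Q + 1)
    refine ⟨N, fun χ S hS => ?_⟩
    obtain ⟨X, hXS, R, hRS, hX, hR, h⟩ := hN χ S hS
    obtain ⟨a, ha, R', hR'R, hR', h'⟩ := h.exists_insert (Q := Q) (by rwa [hX])
    refine ⟨insert a X, insert_subset (hRS ha) hXS, R', hR'R.trans hRS, ?_, hR', h'⟩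
    rw [card_insert_of_notMem fun haX => (h.1 a haX a ha).false, hX]

theorem exists_homogeneous_pairs (κ : Type v) [Fintype κ] (L : ℕ) :
    ∃ N, ∀ {α : Type u} [LinearOrder α] (f : α → α → κ) (S : Finset α), N ≤ #S →
      ∃ Z ⊆ S, #Z = L + 1 ∧ ∃ c, ∀ p ∈ Z, ∀ q ∈ Z, p < q → f p q = c := by
  classical
  obtain ⟨N, hN⟩ := exists_isEndHomogeneous.{u} κ (Fintype.card κ * L + 2) 0
  refine ⟨N, fun f S hS => ?_⟩
  obtain ⟨X, hXS, R, -, hX, hR, h⟩ := hN (fun _ q r => f q r) S hS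
  obtain ⟨r₀, hr₀⟩ := card_pos.mp hR
  have hXne : X.Nonempty := card_pos.mp (by omega)
  set x₀ := X.min' hXne
  -- below every `p ≠ x₀` of `X` lies `x₀`, so `f p ·` is constant above `p`: colour `p` by it
  obtain ⟨c, -, hc⟩ := exists_lt_card_fiber_of_mul_lt_card_of_maps_to
    (s := X.erase x₀) (t := univ) (f := fun p => f p r₀) (n := L) (fun _ _ => mem_univ _)
    (by rw [card_univ, card_erase_of_mem (X.min'_mem hXne), hX]; omega)
  obtain ⟨Z, hZ, hZL⟩ := exists_subset_card_eq hc
  have hZX : Z ⊆ X.erase x₀ := hZ.trans (filter_subset _ _)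
  refine ⟨Z, (hZX.trans (erase_subset _ _)).trans hXS, hZL, c, fun p hp q hq hpq => ?_⟩
  have hpX := mem_erase.mp (hZX hp)
  have hx₀p : x₀ < p := lt_of_le_of_ne (X.min'_le p hpX.2) (Ne.symm hpX.1)
  rw [← (mem_filter.mp (hZ hp)).2]
  exact h.2 x₀ (X.min'_mem hXne) p hpX.2 hx₀p q (mem_union_left _ (erase_subset _ _ (hZX hq)))
    r₀ (mem_union_right _ hr₀) hpq (h.1 p hpX.2 r₀ hr₀)

theorem exists_homogeneous_triples (κ : Type v) [Fintype κ] (L : ℕ) :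
    ∃ N, ∀ {α : Type u} [LinearOrder α] (χ : α → α → α → κ) (S : Finset α), N ≤ #S →
      ∃ Z ⊆ S, #Z = L + 1 ∧
        ∃ c, ∀ p ∈ Z, ∀ q ∈ Z, ∀ r ∈ Z, p < q → q < r → χ p q r = c := by
  obtain ⟨N₂, hN₂⟩ := exists_homogeneous_pairs.{u} κ L
  obtain ⟨N, hN⟩ := exists_isEndHomogeneous.{u} κ N₂ 0
  refine ⟨N, fun χ S hS => ?_⟩
  obtain ⟨X, hXS, R, -, hX, hR, h⟩ := hN χ S hS
  obtain ⟨r₀, hr₀⟩ := card_pos.mp hR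
  obtain ⟨Z, hZX, hZ, c, hc⟩ := hN₂ (fun p q => χ p q r₀) X hX.ge
  refine ⟨Z, hZX.trans hXS, hZ, c, fun p hp q hq r hr hpq hqr => ?_⟩
  rw [h.2 p (hZX hp) q (hZX hq) hpq r (mem_union_left _ (hZX hr)) r₀ (mem_union_right _ hr₀)
    hqr (h.1 q (hZX hq) r₀ hr₀)]
  exact hc p hp q hq hpq

theorem Finset.exists_strictMonoOn_Iic_of_card_eq {α : Type u} [LinearOrder α] {Z : Finset α}
    {L : ℕ} (hZ : #Z = L + 1) : ∃ y : ℕ → α, StrictMonoOn y (Set.Iic L) ∧ ∀ i, y i ∈ Z :=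
  ⟨fun i => Z.orderEmbOfFin hZ ⟨min i L, by omega⟩,
    fun i hi j hj hij => (Z.orderEmbOfFin hZ).strictMono (by
      simp only [Set.mem_Iic] at hi hj
      simp [Fin.lt_def, min_eq_left hi, min_eq_left hj, hij]),
    fun _ => Z.orderEmbOfFin_mem hZ _⟩

section Matrices

variable {m n : ℕ}

/-- The negation of condition (i). -/
def HasOneZeroBlock (M : MatN m n) (b : ℕ) : Prop :=
  ∃ (f : Fin b → Fin m) (j₁ j₂ : Fin n), Function.Injective f ∧ j₁ < j₂ ∧
    ∀ a : Fin b, M (f a) j₁ = 1 ∧ M (f a) j₂ = 0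

theorem hasOneZeroBlock_of_le_card {M : MatN m n} {b : ℕ} {j₁ j₂ : Fin n} (h : j₁ < j₂)
    (hb : b ≤ #{r | M r j₁ = 1 ∧ M r j₂ = 0}) : HasOneZeroBlock M b := by
  obtain ⟨s, hs, hsb⟩ := exists_subset_card_eq hb
  exact ⟨s.orderEmbOfFin hsb, j₁, j₂, (s.orderEmbOfFin hsb).injective, h,
    fun a => (mem_filter.mp (hs (s.orderEmbOfFin_mem hsb a))).2⟩

theorem StrictAnti.add_sub_le {f : Fin n → ℕ} (hf : StrictAnti f) {p q : Fin n}
    (hpq : p ≤ q) : f q + (q - p) ≤ f p := by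
  obtain ⟨d, hd⟩ : ∃ d, (q : ℕ) = p + d := ⟨q - p, by omega⟩
  induction d generalizing q with
  | zero => simp [Fin.ext (hd.trans (add_zero _))]
  | succ d ih =>
    let q' : Fin n := ⟨p + d, by omega⟩
    have h₁ : f q' + d ≤ f p := by
      simpa [q'] using ih (q := q') (by simp [q', Fin.le_def]) rfl
    have h₂ : f q < f q' := hf (by simp [q', Fin.lt_def]; omega)
    omega

theorem exists_witness_row {M : MatN m n} {b : ℕ} (hR : RMat 3 M)
    (hblock : ¬ HasOneZeroBlock M b) (hdec : StrictAnti (colSum M)) {p q : Fin n} (hpq : p < q)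
    (hgap : (p : ℕ) + b ≤ q) : ∃ r, M r p = 1 ∧ M r q = 2 := by
  by_contra! h
  refine hblock (hasOneZeroBlock_of_le_card hpq ?_)
  have hsub : ({r | M r p = 1} : Finset _) ⊆
      ({r | M r q = 1} : Finset _) ∪ ({r | M r p = 1 ∧ M r q = 0} : Finset _) := by
    intro r hr
    simp only [mem_union, mem_filter, mem_univ, true_and] at hr ⊢
    have := hR r q
    have := h r hr
    omega
  have hcard := (card_le_card hsub).trans (card_union_le _ _)
  have := hdec.add_sub_le hpq.le
  unfold colSum at this
  omega

theorem isConfig_of_injective {k p : ℕ} {F : MatN k p} {M : MatN m n}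
    (hF : Function.Injective F) (f : Fin k → Fin m) {g : Fin p → Fin n} (hg : Function.Injective g)
    (hfg : ∀ i j, M (f i) (g j) = F i j) : IsConfig F M :=
  ⟨f, g, fun i i' h => hF (funext fun j => by rw [← hfg, ← hfg, h]), hg, hfg⟩

theorem Imat_injective {ℓ a b : ℕ} (hab : a ≠ b) : Function.Injective (Imat ℓ a b) := by
  intro i i' h
  by_contra hne
  have := congrFun h i
  simp [Imat, Ne.symm hne, hab] at this

theorem Tmat_injective {ℓ a b : ℕ} (hab : a ≠ b) : Function.Injective (Tmat ℓ a b) := by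
  refine Function.Injective.of_lt_imp_ne fun i i' hii' h => ?_
  have := congrFun h i
  simp [Tmat, Fin.lt_def.mp hii', hab.symm] at this

theorem notMem_TFam_two_of_eq_two {ℓ : ℕ} {X : MatN ℓ ℓ} {i j : Fin ℓ} (h : X i j = 2) :
    (⟨ℓ, ℓ, X⟩ : CMat) ∉ TFam ℓ 2 := by
  rintro ⟨a, b, ha, hb, -, hX | hX⟩ <;> cases hX <;> simp only [Imat, Tmat] at h <;>
    split_ifs at h <;> omega

theorem Imat_mem_TFam_sdiff {ℓ a b : ℕ} (hℓ : 2 ≤ ℓ)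
    (hab : a < 3 ∧ b < 3 ∧ a ≠ b ∧ (a = 2 ∨ b = 2)) :
    (⟨ℓ, ℓ, Imat ℓ a b⟩ : CMat) ∈ TFam ℓ 3 \ TFam ℓ 2 := by
  obtain ⟨ha, hb, hab, h2 | h2⟩ := hab
  · exact ⟨⟨a, b, ha, hb, hab, .inl rfl⟩, notMem_TFam_two_of_eq_two (i := ⟨0, by omega⟩)
      (j := ⟨0, by omega⟩) (by simpa [Imat] using h2)⟩
  · exact ⟨⟨a, b, ha, hb, hab, .inl rfl⟩, notMem_TFam_two_of_eq_two (i := ⟨0, by omega⟩)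
      (j := ⟨1, by omega⟩) (by simpa [Imat] using h2)⟩

theorem Tmat_mem_TFam_sdiff {ℓ a b : ℕ} (hℓ : 2 ≤ ℓ)
    (hab : a < 3 ∧ b < 3 ∧ a ≠ b ∧ (a = 2 ∨ b = 2)) :
    (⟨ℓ, ℓ, Tmat ℓ a b⟩ : CMat) ∈ TFam ℓ 3 \ TFam ℓ 2 := by
  obtain ⟨ha, hb, hab, h2 | h2⟩ := hab
  · exact ⟨⟨a, b, ha, hb, hab, .inr rfl⟩, notMem_TFam_two_of_eq_two (i := ⟨1, by omega⟩)
      (j := ⟨0, by omega⟩) (by simpa [Tmat] using h2)⟩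
  · exact ⟨⟨a, b, ha, hb, hab, .inr rfl⟩, notMem_TFam_two_of_eq_two (i := ⟨0, by omega⟩)
      (j := ⟨0, by omega⟩) (by simpa [Tmat] using h2)⟩

end Matrices

/-- Row `(u, v)` of a homogeneous family of witness rows, read at column `t`:
`x … x 1 y … y 2 z … z`, with the `1` at `u` and the `2` at `v`. -/
def rowPattern (x y z u v t : ℕ) : ℕ :=
  if t < u then x else if t = u then 1 else if t < v then y else if t = v then 2 else z

structure WitnessPattern {m n : ℕ} (M : MatN m n) (L x y z : ℕ) where
  col : ℕ → Fin n
  row : ℕ → ℕ → Fin m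
  col_strictMonoOn : StrictMonoOn col (Set.Iic L)
  entry : ∀ u v t, u < v → v ≤ L → t ≤ L → M (row u v) (col t) = rowPattern x y z u v t

namespace WitnessPattern

variable {m n L x y z b ℓ : ℕ} {M : MatN m n}

theorem injective_col_comp (P : WitnessPattern M L x y z) {k : ℕ} {φ : Fin k → ℕ}
    (hφ : Function.Injective φ) (hφL : ∀ u, φ u ≤ L) :
    Function.Injective fun u => P.col (φ u) :=
  fun u u' h => hφ (P.col_strictMonoOn.injOn (hφL u) (hφL u') h)

theorem row_zero_ne (P : WitnessPattern M L x y z) (hy : y ≠ 2) {v v' : ℕ} (hv : 0 < v)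
    (hvv' : v < v') (hv' : v' ≤ L) : P.row 0 v ≠ P.row 0 v' := by
  intro h
  have h₁ := P.entry 0 v v hv (by omega) (by omega)
  have h₂ := P.entry 0 v' v (by omega) hv' (by omega)
  rw [h, h₂] at h₁
  simp only [rowPattern] at h₁
  split_ifs at h₁ <;> omega

theorem injective_row_zero (P : WitnessPattern M L x y z) (hy : y ≠ 2) {s : ℕ} (hs : 0 < s)
    (hL : b + s ≤ L + 1) : Function.Injective fun t : Fin b => P.row 0 (t + s) :=
  .of_lt_imp_ne fun t t' htt' => P.row_zero_ne hy (by omega) (by simpa using htt') (by omega)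

theorem hasOneZeroBlock_of_between_eq_zero (P : WitnessPattern M L x 0 z) (hL : b + 1 ≤ L) :
    HasOneZeroBlock M b :=
  ⟨fun t => P.row 0 (t + 2), P.col 0, P.col 1,
    P.injective_row_zero (by norm_num) two_pos (by omega),
    P.col_strictMonoOn (by simp) (by simp; omega) one_pos, fun t =>
      ⟨by rw [P.entry _ _ _ (by omega) (by omega) (by omega)]; simp [rowPattern],
        by rw [P.entry _ _ _ (by omega) (by omega) (by omega)]; simp [rowPattern]⟩⟩

theorem hasOneZeroBlock_of_after_eq_zero (P : WitnessPattern M L x y 0) (hy : y ≠ 2)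
    (hL : b + 1 ≤ L) : HasOneZeroBlock M b :=
  ⟨fun t => P.row 0 (t + 1), P.col 0, P.col L, P.injective_row_zero hy one_pos (by omega),
    P.col_strictMonoOn (by simp) (by simp) (by omega), fun t =>
      ⟨by rw [P.entry _ _ _ (by omega) (by omega) (by omega)]; simp [rowPattern],
        by rw [P.entry _ _ _ (by omega) (by omega) le_rfl]; simp only [rowPattern]
           split_ifs <;> omega⟩⟩

theorem isConfig_Imat_two_one (P : WitnessPattern M L x 1 1) (hL : ℓ ≤ L) :
    IsConfig (Imat ℓ 2 1) M :=
  isConfig_of_injective (Imat_injective (by norm_num)) (fun t => P.row 0 (t + 1))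
    (P.injective_col_comp (φ := fun u => u + 1) (fun u u' h => by simp at h; omega) (by omega))
    fun t u => by
      rw [P.entry _ _ _ (by omega) (by omega) (by omega)]
      grind [rowPattern, Imat]

theorem isConfig_Tmat_one_two_of_between_eq_one (P : WitnessPattern M L x 1 2) (hL : ℓ ≤ L) :
    IsConfig (Tmat ℓ 1 2) M :=
  isConfig_of_injective (Tmat_injective (by norm_num)) (fun t => P.row 0 (t + 1))
    (P.injective_col_comp (φ := fun u => u + 1) (fun u u' h => by simp at h; omega) (by omega))
    fun t u => by
      rw [P.entry _ _ _ (by omega) (by omega) (by omega)]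
      grind [rowPattern, Tmat]

-- Rows `(2t, L)` against columns `2u + 1`: interleaving keeps the `1`s of the rows out of sight.
theorem isConfig_Tmat_zero_two (P : WitnessPattern M L 0 2 z) (hL : 2 * ℓ ≤ L) :
    IsConfig (Tmat ℓ 0 2) M :=
  isConfig_of_injective (Tmat_injective (by norm_num)) (fun t => P.row (2 * t) L)
    (P.injective_col_comp (φ := fun u => 2 * u + 1) (fun u u' h => by simp at h; omega)
      (by omega))
    fun t u => by
      rw [P.entry _ _ _ (by omega) le_rfl (by omega)]
      grind [rowPattern, Tmat]

theorem isConfig_Tmat_one_two_of_between_eq_two (P : WitnessPattern M L 1 2 z) (hL : ℓ < L) :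
    IsConfig (Tmat ℓ 1 2) M :=
  isConfig_of_injective (Tmat_injective (by norm_num)) (fun t => P.row t L)
    (P.injective_col_comp (φ := fun u => u + 1) (fun u u' h => by simp at h; omega) (by omega))
    fun t u => by
      rw [P.entry _ _ _ (by omega) le_rfl (by omega)]
      grind [rowPattern, Tmat]

theorem isConfig_Imat_one_two (P : WitnessPattern M L 2 2 z) (hL : ℓ ≤ L) :
    IsConfig (Imat ℓ 1 2) M :=
  isConfig_of_injective (Imat_injective (by norm_num)) (fun t => P.row t L)
    (P.injective_col_comp (φ := fun u => u) Fin.val_injective (by omega))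
    fun t u => by
      rw [P.entry _ _ _ (by omega) le_rfl (by omega)]
      grind [rowPattern, Imat]

theorem hasOneZeroBlock_or_isConfig (P : WitnessPattern M L x y z) (hx : x < 3) (hy : y < 3)
    (hz : z < 3) (hℓ : 2 ≤ ℓ) (hL : 2 * ℓ + b ≤ L) :
    HasOneZeroBlock M b ∨ ∃ F ∈ TFam ℓ 3 \ TFam ℓ 2, IsConfig F.mat M := by
  interval_cases y
  · exact .inl (P.hasOneZeroBlock_of_between_eq_zero (by omega))
  · interval_cases z
    · exact .inl (P.hasOneZeroBlock_of_after_eq_zero (by norm_num) (by omega))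
    · exact .inr ⟨_, Imat_mem_TFam_sdiff hℓ (by norm_num),
        P.isConfig_Imat_two_one (ℓ := ℓ) (by omega)⟩
    · exact .inr ⟨_, Tmat_mem_TFam_sdiff hℓ (by norm_num),
        P.isConfig_Tmat_one_two_of_between_eq_one (ℓ := ℓ) (by omega)⟩
  · refine .inr ?_
    interval_cases x
    · exact ⟨_, Tmat_mem_TFam_sdiff hℓ (by norm_num),
        P.isConfig_Tmat_zero_two (ℓ := ℓ) (by omega)⟩
    · exact ⟨_, Tmat_mem_TFam_sdiff hℓ (by norm_num),
        P.isConfig_Tmat_one_two_of_between_eq_two (ℓ := ℓ) (by omega)⟩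
    · exact ⟨_, Imat_mem_TFam_sdiff hℓ (by norm_num),
        P.isConfig_Imat_one_two (ℓ := ℓ) (by omega)⟩

end WitnessPattern

theorem exists_witnessPattern (L : ℕ) :
    ∃ N, ∀ {m n k : ℕ} (M : MatN m n), RMat 3 M → ∀ e : Fin k → Fin n, StrictMono e →
      (∀ i j, i < j → ∃ r, M r (e i) = 1 ∧ M r (e j) = 2) → N ≤ k →
        ∃ x < 3, ∃ y < 3, ∃ z < 3, Nonempty (WitnessPattern M L x y z) := by
  obtain ⟨N, hN⟩ := exists_homogeneous_triples.{0} (Fin 3 × Fin 3 × Fin 3) L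
  refine ⟨max N 2, fun {m n k} M hR e he hW hk => ?_⟩
  have : Nonempty (Fin m) := (hW ⟨0, by omega⟩ ⟨1, by omega⟩ (by simp [Fin.lt_def])).nonempty
  choose! W hW using hW
  let entry : Fin m → Fin n → Fin 3 := fun r j => ⟨M r j, hR r j⟩
  -- `i < j < k` is coloured by the entries of the rows `(j, k)`, `(i, j)`, `(i, k)` in the
  -- remaining column, i.e. by the values before, after and between the witnessed pair
  obtain ⟨Z, -, hZ, ⟨x, z, y⟩, hxzy⟩ := hN (fun i j k =>
    (entry (W j k) (e i), entry (W i j) (e k), entry (W i k) (e j))) univ (by simp; omega)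
  obtain ⟨c, hc, hcZ⟩ := Z.exists_strictMonoOn_Iic_of_card_eq hZ
  have hom {i j k : ℕ} (hij : i < j) (hjk : j < k) (hk : k ≤ L) :=
    hxzy _ (hcZ i) _ (hcZ j) _ (hcZ k) (hc (by simp; omega) (by simp; omega) hij)
      (hc (by simp; omega) hk hjk)
  refine ⟨x, x.isLt, y, y.isLt, z, z.isLt, ⟨⟨e ∘ c, fun u v => W (c u) (c v),
    he.comp_strictMonoOn hc, fun u v t huv hv ht => ?_⟩⟩⟩
  have hW' := hW _ _ (hc (by simp; omega) hv huv)
  simp only [rowPattern, Function.comp_apply]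
  split_ifs with htu htu' htv htv'
  · exact congrArg (fun w => (w.1 : ℕ)) (hom htu huv hv)
  · exact htu' ▸ hW'.1
  · exact congrArg (fun w => (w.2.2 : ℕ)) (hom (i := u) (j := t) (by omega) htv hv)
  · exact htv' ▸ hW'.2
  · exact congrArg (fun w => (w.2.1 : ℕ)) (hom (k := t) huv (by omega) ht)

/-- For `ℓ ≥ 2`, `b ≥ 1`, there is a constant `C` such that every
`m`-rowed 3-matrix `M` with (i) no `b×2` submatrix `[𝟏_b 𝟎_b]`, (ii) strictly
decreasing column sums, and (iii) avoiding `𝒯_ℓ(3) \ 𝒯_ℓ(2)`, has fewer than `C`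
columns. -/
theorem stmt17 (ℓ b : ℕ) (hℓ : 2 ≤ ℓ) (hb : 1 ≤ b) :
    ∃ C : ℕ, ∀ (m n : ℕ) (M : MatN m n), RMat 3 M →
      (¬ ∃ (f : Fin b → Fin m) (j₁ j₂ : Fin n), Function.Injective f ∧ j₁ < j₂ ∧
          ∀ a : Fin b, M (f a) j₁ = 1 ∧ M (f a) j₂ = 0) →
      (∀ j₁ j₂ : Fin n, j₁ < j₂ → colSum M j₂ < colSum M j₁) →
      AvoidsFam M (TFam ℓ 3 \ TFam ℓ 2) →
      n < C := by
  obtain ⟨N, hN⟩ := exists_witnessPattern (2 * ℓ + b)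
  refine ⟨b * N + 1, fun m n M hR hblock hdec hAvoid => ?_⟩
  by_contra! hn
  let e : Fin N → Fin n := fun i => ⟨b * i, by nlinarith [i.isLt]⟩
  have he : StrictMono e := fun i j hij => Nat.mul_lt_mul_of_pos_left hij hb
  have hW (i j : Fin N) (hij : i < j) : ∃ r, M r (e i) = 1 ∧ M r (e j) = 2 :=
    exists_witness_row hR hblock hdec (he hij) (by simp only [e]; nlinarith [Fin.lt_def.mp hij])
  obtain ⟨x, hx, y, hy, z, hz, ⟨P⟩⟩ := hN M hR e he hW le_rfl
  rcases P.hasOneZeroBlock_or_isConfig hx hy hz hℓ le_rfl with h | ⟨F, hF, hFM⟩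
  exacts [hblock h, hAvoid F hF hFM]
end
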